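/- arXiv:2202.11153 — 3 statements merged into one kernel-verified Lean document; each statement's English description precedes it below -/
import Mathlib

section
/- Let (M, g) be Riemannian with P a symmetric 2-tensor satisfying the Codazzi condition ∇_i P_{jk} = ∇_j P_{ik}. For ρ small, define U^i_j := δ^i_j + ρ P^i_j (assumed invertible with inverse V), and g_ρ(X,Y) := g(U X, U Y), i.e., (g_ρ)_{ij} = U_{ik} U^k_j. Then the connection D defined by D_i η_j := ∇_i η_j - ρ V^k_l ∇_j P^l_i η_k is torsion-free and makes g_ρ parallel; hence D is the Levi-Civita connection of g_ρ. -/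
open Matrix BigOperators

noncomputable section

/-- A metric (or 2-tensor) field on a coordinate patch of `ℝⁿ`, given by its
component matrix at each point. -/
abbrev MetricField (n : ℕ) := (Fin n → ℝ) → Matrix (Fin n) (Fin n) ℝ

/-- Partial derivative of a scalar function in the `i`-th coordinate direction. -/
def pd {n : ℕ} (i : Fin n) (h : (Fin n → ℝ) → ℝ) (x : Fin n → ℝ) : ℝ :=
  fderiv ℝ h x (Pi.single i 1)

/-- Christoffel symbols of the first kind `Γ_{ijk}`. -/
def ChristoffelLow {n : ℕ} (g : MetricField n) (i j k : Fin n) (x : Fin n → ℝ) : ℝ :=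
  (pd i (fun y => g y j k) x + pd j (fun y => g y i k) x - pd k (fun y => g y i j) x) / 2

/-- Christoffel symbols of the second kind `Γ^l_{ij}`. -/
def Christoffel {n : ℕ} (g : MetricField n) (l i j : Fin n) (x : Fin n → ℝ) : ℝ :=
  ∑ k, (g x)⁻¹ l k * ChristoffelLow g i j k x

/-- Riemann curvature tensor `R^l_{ijk}` (type (1,3)). -/
def RiemannUp {n : ℕ} (g : MetricField n) (l i j k : Fin n) (x : Fin n → ℝ) : ℝ :=
  pd j (fun y => Christoffel g l k i y) x - pd k (fun y => Christoffel g l j i y) x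
    + ∑ p, Christoffel g l j p x * Christoffel g p k i x
    - ∑ p, Christoffel g l k p x * Christoffel g p j i x

/-- Riemann curvature tensor `R_{ijkl}` (type (0,4)). -/
def RiemannLow {n : ℕ} (g : MetricField n) (i j k l : Fin n) (x : Fin n → ℝ) : ℝ :=
  ∑ m, g x i m * RiemannUp g m j k l x

/-- Ricci tensor `R_{ij} = ∂_L Γ^L_{ij} - ∂_i Γ^L_{Lj} + Γ^P_{ij} Γ^L_{LP} - Γ^P_{Lj} Γ^L_{iP}`. -/
def RicciT {n : ℕ} (g : MetricField n) (i j : Fin n) (x : Fin n → ℝ) : ℝ :=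
  (∑ l, pd l (fun y => Christoffel g l i j y) x)
    - (∑ l, pd i (fun y => Christoffel g l l j y) x)
    + (∑ p, ∑ l, Christoffel g p i j x * Christoffel g l l p x)
    - (∑ p, ∑ l, Christoffel g p l j x * Christoffel g l i p x)

/-- Covariant Hessian `(∇²f)_{ij}` with respect to the metric `g`. -/
def HessT {n : ℕ} (g : MetricField n) (f : (Fin n → ℝ) → ℝ) (i j : Fin n) (x : Fin n → ℝ) : ℝ :=
  pd i (fun y => pd j f y) x - ∑ k, Christoffel g k i j x * pd k f x

/-- Laplacian `Δf = g^{ij}(∇²f)_{ij}`. -/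
def LapT {n : ℕ} (g : MetricField n) (f : (Fin n → ℝ) → ℝ) (x : Fin n → ℝ) : ℝ :=
  ∑ i, ∑ j, (g x)⁻¹ i j * HessT g f i j x

/-- Squared gradient norm `|∇f|² = g^{ij} ∂_i f ∂_j f`. -/
def GradSq {n : ℕ} (g : MetricField n) (f : (Fin n → ℝ) → ℝ) (x : Fin n → ℝ) : ℝ :=
  ∑ i, ∑ j, (g x)⁻¹ i j * pd i f x * pd j f x

/-- Scalar curvature `R = g^{ij} R_{ij}`. -/
def ScalarT {n : ℕ} (g : MetricField n) (x : Fin n → ℝ) : ℝ :=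
  ∑ i, ∑ j, (g x)⁻¹ i j * RicciT g i j x

/-- Bakry–Émery Ricci tensor `Ric - (m/f) ∇²f`. -/
def BERic {n : ℕ} (g : MetricField n) (m : ℝ) (f : (Fin n → ℝ) → ℝ) (i j : Fin n)
    (x : Fin n → ℝ) : ℝ :=
  RicciT g i j x - (m / f x) * HessT g f i j x

/-- The weighted quantity `F_φ^m = f Δf + (m-1)(|∇f|² - μ)`. -/
def Fphi {n : ℕ} (g : MetricField n) (m μ : ℝ) (f : (Fin n → ℝ) → ℝ) (x : Fin n → ℝ) : ℝ :=
  f x * LapT g f x + (m - 1) * (GradSq g f x - μ)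

/-- The weighted scalar curvature `R_φ^m = R - (2m/f)Δf - (m(m-1)/f²)(|∇f|² - μ)`. -/
def Rphi {n : ℕ} (g : MetricField n) (m μ : ℝ) (f : (Fin n → ℝ) → ℝ) (x : Fin n → ℝ) : ℝ :=
  ScalarT g x - (2 * m / f x) * LapT g f x
    - (m * (m - 1) / (f x) ^ 2) * (GradSq g f x - μ)

/-- Covariant derivative `∇_k P_{ij}` of a 2-tensor field `P` with respect to `g`. -/
def CovD2 {n : ℕ} (g P : MetricField n) (k i j : Fin n) (x : Fin n → ℝ) : ℝ :=
  pd k (fun y => P y i j) x - (∑ l, Christoffel g l k i x * P x l j)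
    - (∑ l, Christoffel g l k j x * P x i l)

/-- Embedding of the `M`-indices into the ambient indices `{0} ∪ M ∪ {∞}`:
index `0` is the `t`-direction and `Fin.last (d+1)` is the `ρ`-direction. -/
def emb {d : ℕ} (i : Fin d) : Fin (d + 2) := i.succ.castSucc

/-- The `M`-coordinates of an ambient point. -/
def mcoord {d : ℕ} (x : Fin (d + 2) → ℝ) : Fin d → ℝ := fun i => x (emb i)

/-- The straight and normal ambient metric `g̃ = 2ρ dt² + 2t dρ dt + t² g_ρ` built from a
one-parameter family `g_ρ` of metrics on `M`; coordinates `(t, x, ρ)` with `t` indexed by `0`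
and `ρ` indexed by `Fin.last (d+1)`. -/
def ambMetric {d : ℕ} (gf : ℝ → (Fin d → ℝ) → Matrix (Fin d) (Fin d) ℝ) :
    MetricField (d + 2) := fun x =>
  Matrix.of fun I J =>
    (if I = 0 ∧ J = 0 then 2 * x (Fin.last (d + 1)) else 0)
      + (if (I = 0 ∧ J = Fin.last (d + 1)) ∨ (I = Fin.last (d + 1) ∧ J = 0) then x 0 else 0)
      + (x 0) ^ 2 * ∑ i, ∑ j,
          (if I = emb i ∧ J = emb j then gf (x (Fin.last (d + 1))) (mcoord x) i j else 0)

/-- The ambient weighted function `f̃ = t f_ρ`. -/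
def ambF {d : ℕ} (ff : ℝ → (Fin d → ℝ) → ℝ) (x : Fin (d + 2) → ℝ) : ℝ :=
  x 0 * ff (x (Fin.last (d + 1))) (mcoord x)

/-- The cone metric `g̃ = -ds² + s² g₊` on `ℝ₊ × M` where `M` is `(d+1)`-dimensional;
the coordinate `s` is indexed by `0`. -/
def coneMetric {d : ℕ}
    (gp : (Fin (d + 1) → ℝ) → Matrix (Fin (d + 1)) (Fin (d + 1)) ℝ) :
    MetricField (d + 2) := fun x =>
  Matrix.of fun I J =>
    (if I = 0 ∧ J = 0 then -1 else 0)
      + (x 0) ^ 2 * ∑ i, ∑ j,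
          (if I = Fin.succ i ∧ J = Fin.succ j then gp (x ∘ Fin.succ) i j else 0)

/-- The cone weighted function `f̃ = s f₊`. -/
def coneF {d : ℕ} (fp : (Fin (d + 1) → ℝ) → ℝ) (x : Fin (d + 2) → ℝ) : ℝ :=
  x 0 * fp (x ∘ Fin.succ)

namespace CzAux

variable {n : ℕ}

theorem pd_add {f h : (Fin n → ℝ) → ℝ} {x} (hf : DifferentiableAt ℝ f x)
    (hh : DifferentiableAt ℝ h x) (i : Fin n) :
    pd i (fun y => f y + h y) x = pd i f x + pd i h x := by
  simp [pd, fderiv_fun_add hf hh]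

theorem pd_mul {f h : (Fin n → ℝ) → ℝ} {x} (hf : DifferentiableAt ℝ f x)
    (hh : DifferentiableAt ℝ h x) (i : Fin n) :
    pd i (fun y => f y * h y) x = f x * pd i h x + pd i f x * h x := by
  simp [pd, fderiv_fun_mul hf hh, mul_comm]

theorem pd_sum {ι : Type*} {s : Finset ι} {f : ι → (Fin n → ℝ) → ℝ} {x}
    (hf : ∀ l ∈ s, DifferentiableAt ℝ (f l) x) (i : Fin n) :
    pd i (fun y => ∑ l ∈ s, f l y) x = ∑ l ∈ s, pd i (f l) x := by
  simp [pd, fderiv_fun_sum hf]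

theorem pd_const (i : Fin n) (c : ℝ) (x) : pd i (fun _ => c) x = 0 := by
  simp [pd]

theorem pd_const_mul {f : (Fin n → ℝ) → ℝ} {x} (hf : DifferentiableAt ℝ f x)
    (c : ℝ) (i : Fin n) :
    pd i (fun y => c * f y) x = c * pd i f x := by
  simp [pd, fderiv_const_mul hf c]

/-- Entrywise differentiability of a matrix-valued function. -/
def EDiff (F : (Fin n → ℝ) → Matrix (Fin n) (Fin n) ℝ) : Prop :=
  ∀ i j, Differentiable ℝ fun y => F y i j

theorem EDiff.mul {F G : (Fin n → ℝ) → Matrix (Fin n) (Fin n) ℝ}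
    (hF : EDiff F) (hG : EDiff G) : EDiff fun y => F y * G y := by
  intro i j
  have : (fun y => (F y * G y) i j) = fun y => ∑ l, F y i l * G y l j := by
    funext y; simp [Matrix.mul_apply]
  rw [this]
  exact Differentiable.fun_sum fun l _ => (hF i l).mul (hG l j)

/-- Entrywise partial derivative of a matrix-valued function, as a matrix. -/
def mpd (k : Fin n) (F : (Fin n → ℝ) → Matrix (Fin n) (Fin n) ℝ) (x : Fin n → ℝ) :
    Matrix (Fin n) (Fin n) ℝ :=
  Matrix.of fun i j => pd k (fun y => F y i j) x

theorem mpd_mul {F G : (Fin n → ℝ) → Matrix (Fin n) (Fin n) ℝ}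
    (hF : EDiff F) (hG : EDiff G) (k : Fin n) (x) :
    mpd k (fun y => F y * G y) x = mpd k F x * G x + F x * mpd k G x := by
  ext i j
  have h1 : (fun y => (F y * G y) i j) = fun y => ∑ l, F y i l * G y l j := by
    funext y; simp [Matrix.mul_apply]
  simp only [mpd, Matrix.of_apply, Matrix.add_apply, Matrix.mul_apply, h1]
  rw [pd_sum (fun l _ => ((hF i l).fun_mul (hG l j)).differentiableAt) k]
  rw [← Finset.sum_add_distrib]
  refine Finset.sum_congr rfl fun l _ => ?_
  rw [pd_mul ((hF i l).differentiableAt) ((hG l j).differentiableAt) k]; ring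

theorem mpd_one (k : Fin n) (x) :
    mpd k (fun _ => (1 : Matrix (Fin n) (Fin n) ℝ)) x = 0 := by
  ext i j; simp [mpd, pd_const]

theorem mpd_congr {F G : (Fin n → ℝ) → Matrix (Fin n) (Fin n) ℝ}
    (h : ∀ y, F y = G y) (k : Fin n) (x) : mpd k F x = mpd k G x := by
  have : F = G := funext h
  rw [this]

theorem mpd_one_add_smul {H : (Fin n → ℝ) → Matrix (Fin n) (Fin n) ℝ}
    (hH : EDiff H) (ρ : ℝ) (k : Fin n) (x) :
    mpd k (fun y => 1 + ρ • H y) x = ρ • mpd k H x := by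
  ext i j
  have h1 : (fun y => (1 + ρ • H y) i j) =
      fun y => ((1 : Matrix (Fin n) (Fin n) ℝ) i j) + ρ * H y i j := by
    funext y; simp [Matrix.add_apply]
  simp only [mpd, Matrix.of_apply, Matrix.smul_apply, h1, smul_eq_mul]
  rw [pd_add (differentiableAt_const _) (((hH i j).const_mul ρ).differentiableAt),
    pd_const, pd_const_mul ((hH i j).differentiableAt)]
  ring

theorem diff_finset_prod {ι : Type*} (s : Finset ι) (f : ι → (Fin n → ℝ) → ℝ)
    (h : ∀ i ∈ s, Differentiable ℝ (f i)) :
    Differentiable ℝ fun y => ∏ i ∈ s, f i y := by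
  classical
  induction s using Finset.induction with
  | empty => simpa using differentiable_const (1 : ℝ)
  | insert a s hx ih =>
    simp only [Finset.prod_insert hx]
    exact (h a (Finset.mem_insert_self a s)).mul
      (ih fun i hi => h i (Finset.mem_insert_of_mem hi))

/-- Differentiability of the determinant of a matrix with differentiable entries. -/
theorem EDiff.det {F : (Fin n → ℝ) → Matrix (Fin n) (Fin n) ℝ} (hF : EDiff F) :
    Differentiable ℝ fun y => (F y).det := by
  have : (fun y => (F y).det)
      = fun y => ∑ σ : Equiv.Perm (Fin n), (Equiv.Perm.sign σ : ℝ) * ∏ i, F y (σ i) i := by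
    funext y
    rw [Matrix.det_apply]
    refine Finset.sum_congr rfl fun σ _ => ?_
    simp [Units.smul_def, zsmul_eq_mul]
  rw [this]
  refine Differentiable.fun_sum fun σ _ => Differentiable.const_mul ?_ _
  exact diff_finset_prod Finset.univ (fun i y => F y (σ i) i) fun i _ => hF (σ i) i

theorem EDiff.inv {F : (Fin n → ℝ) → Matrix (Fin n) (Fin n) ℝ} (hF : EDiff F)
    (hdet : ∀ y, (F y).det ≠ 0) : EDiff fun y => (F y)⁻¹ := by
  intro i j
  have : (fun y => (F y)⁻¹ i j)
      = fun y => ((F y).det)⁻¹ * ((F y).updateRow j (Pi.single i 1)).det := by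
    funext y
    rw [Matrix.inv_def, Matrix.smul_apply, Matrix.adjugate_apply, Ring.inverse_eq_inv']
    rfl
  rw [this]
  refine Differentiable.mul (Differentiable.inv hF.det hdet) (EDiff.det ?_)
  intro a b
  rcases eq_or_ne a j with rfl | h
  · simp only [Matrix.updateRow_apply, if_pos rfl]
    exact differentiable_const _
  · simpa [Matrix.updateRow_apply, h] using hF a b


def Cmat {d : ℕ} (g : MetricField d) (k : Fin d) (x : Fin d → ℝ) :
    Matrix (Fin d) (Fin d) ℝ :=
  Matrix.of fun l i => Christoffel g l k i x

def Nmat {d : ℕ} (g P : MetricField d) (k : Fin d) (x : Fin d → ℝ) :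
    Matrix (Fin d) (Fin d) ℝ :=
  Matrix.of fun i j => CovD2 g P k i j x

def Uf {d : ℕ} (g P : MetricField d) (ρ : ℝ) : MetricField d :=
  fun y => 1 + ρ • ((g y)⁻¹ * P y)

def Sf {d : ℕ} (g P : MetricField d) (ρ : ℝ) : MetricField d :=
  fun y => g y * Uf g P ρ y * Uf g P ρ y

def Fmat {d : ℕ} (g P : MetricField d) (ρ : ℝ) (k : Fin d) (x : Fin d → ℝ) :
    Matrix (Fin d) (Fin d) ℝ :=
  Cmat g k x + ρ • ((Uf g P ρ x)⁻¹ * ((g x)⁻¹ * Nmat g P k x))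

end CzAux

open CzAux



/-- For a symmetric Codazzi tensor `P` on `(M,g)`, `U = Id + ρP` invertible
with inverse `V`, and `g_ρ = g(U·, U·)`, the connection
`D_i η_j = ∇_i η_j - ρ V^k_l ∇_j P^l_i η_k` is torsion-free and makes `g_ρ` parallel;
hence `D` is the Levi-Civita connection of `g_ρ`. -/
theorem codazzi_connection_is_levi_civita {d : ℕ} (g P : MetricField d) (ρ : ℝ)
    (hgs : ∀ i j, ContDiff ℝ (⊤ : ℕ∞) fun x => g x i j)
    (hPs : ∀ i j, ContDiff ℝ (⊤ : ℕ∞) fun x => P x i j)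
    (hgsym : ∀ x, (g x).IsSymm) (hgpos : ∀ x, (g x).PosDef)
    (hPsym : ∀ x, (P x).IsSymm)
    (hCodazzi : ∀ (x : Fin d → ℝ) (i j k : Fin d),
      CovD2 g P i j k x = CovD2 g P j i k x)
    (hU : ∀ x : Fin d → ℝ, IsUnit ((1 + ρ • ((g x)⁻¹ * P x)).det)) :
    -- the difference-tensor coefficients of the connection D
    (∀ (x : Fin d → ℝ) (k i j : Fin d),
      -- torsion-free: D^k_{ij} = D^k_{ji}
      Christoffel g k i j x
          + ρ * ∑ l, (1 + ρ • ((g x)⁻¹ * P x))⁻¹ k l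
              * (∑ a, (g x)⁻¹ l a * CovD2 g P j a i x)
        = Christoffel g k j i x
            + ρ * ∑ l, (1 + ρ • ((g x)⁻¹ * P x))⁻¹ k l
                * (∑ a, (g x)⁻¹ l a * CovD2 g P i a j x))
    ∧ -- g_ρ is parallel for D
    (∀ (x : Fin d → ℝ) (k i j : Fin d),
      pd k (fun y => (g y * (1 + ρ • ((g y)⁻¹ * P y)) * (1 + ρ • ((g y)⁻¹ * P y))) i j) x
          - (∑ l, (Christoffel g l k i x
                + ρ * ∑ l', (1 + ρ • ((g x)⁻¹ * P x))⁻¹ l l'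
                    * (∑ a, (g x)⁻¹ l' a * CovD2 g P i a k x))
              * (g x * (1 + ρ • ((g x)⁻¹ * P x)) * (1 + ρ • ((g x)⁻¹ * P x))) l j)
          - (∑ l, (Christoffel g l k j x
                + ρ * ∑ l', (1 + ρ • ((g x)⁻¹ * P x))⁻¹ l l'
                    * (∑ a, (g x)⁻¹ l' a * CovD2 g P j a k x))
              * (g x * (1 + ρ • ((g x)⁻¹ * P x)) * (1 + ρ • ((g x)⁻¹ * P x))) i l)
        = 0)
    ∧ -- hence D is the Levi-Civita connection of g_ρ
    (∀ (x : Fin d → ℝ) (k i j : Fin d),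
      Christoffel g k i j x
          + ρ * ∑ l, (1 + ρ • ((g x)⁻¹ * P x))⁻¹ k l
              * (∑ a, (g x)⁻¹ l a * CovD2 g P j a i x)
        = Christoffel
            (fun y => g y * (1 + ρ • ((g y)⁻¹ * P y)) * (1 + ρ • ((g y)⁻¹ * P y)))
            k i j x) := by
  
  classical
  -- differentiability facts
  have hgd : ∀ i j, Differentiable ℝ fun y => g y i j := fun i j => (hgs i j).differentiable (by simp)
  have hPd : ∀ i j, Differentiable ℝ fun y => P y i j := fun i j => (hPs i j).differentiable (by simp)
  have hgE : EDiff g := hgd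
  have hPE : EDiff P := hPd
  have hdetg : ∀ y, (g y).det ≠ 0 := fun y => (hgpos y).det_pos.ne'
  have hgUdet : ∀ y, IsUnit (g y).det := fun y => isUnit_iff_ne_zero.mpr (hdetg y)
  have hgiE : EDiff fun y => (g y)⁻¹ := hgE.inv hdetg
  have hGPE : EDiff fun y => (g y)⁻¹ * P y := hgiE.mul hPE
  have hUE : EDiff (Uf g P ρ) := by
    intro i j
    have h : (fun y => Uf g P ρ y i j)
        = fun y => (1 : Matrix (Fin d) (Fin d) ℝ) i j + ρ * ((g y)⁻¹ * P y) i j := by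
      funext y; simp [Uf, Matrix.add_apply]
    rw [h]
    exact (differentiable_const _).add ((hGPE i j).const_mul ρ)
  -- symmetry facts
  have entsym : ∀ A : Matrix (Fin d) (Fin d) ℝ, Aᵀ = A → ∀ i j, A i j = A j i := by
    intro A h i j
    conv_lhs => rw [← h]
    rfl
  have hgsym' : ∀ y (i j : Fin d), g y i j = g y j i := fun y => entsym (g y) (hgsym y)
  have hPsym' : ∀ y (i j : Fin d), P y i j = P y j i := fun y => entsym (P y) (hPsym y)
  have hgisymm : ∀ y, ((g y)⁻¹)ᵀ = (g y)⁻¹ := fun y => by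
    rw [Matrix.transpose_nonsing_inv, show (g y)ᵀ = g y from hgsym y]
  have hgisym' : ∀ y (i j : Fin d), (g y)⁻¹ i j = (g y)⁻¹ j i := fun y =>
    entsym _ (hgisymm y)
  have hpdg : ∀ (x : Fin d → ℝ) (k i j : Fin d),
      pd k (fun y => g y j i) x = pd k (fun y => g y i j) x := fun x k i j => by
    rw [show (fun y => g y j i) = fun y => g y i j from funext fun y => (hgsym' y i j).symm]
  -- Christoffel symmetry
  have hCLsym : ∀ (x : Fin d → ℝ) (i j a : Fin d),
      ChristoffelLow g i j a x = ChristoffelLow g j i a x := fun x i j a => by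
    simp only [ChristoffelLow]
    rw [hpdg x a i j]
    ring
  have hChsym : ∀ (x : Fin d → ℝ) (k i j : Fin d),
      Christoffel g k i j x = Christoffel g k j i x := fun x k i j => by
    simp only [Christoffel]
    exact Finset.sum_congr rfl fun a _ => by rw [hCLsym x i j a]
  -- CovD2 symmetries
  have hCov23 : ∀ (x : Fin d → ℝ) (k i j : Fin d),
      CovD2 g P k i j x = CovD2 g P k j i x := fun x k i j => by
    simp only [CovD2]
    rw [show (fun y => P y i j) = fun y => P y j i from funext fun y => hPsym' y i j]
    rw [show (∑ l, Christoffel g l k i x * P x l j) = ∑ l, Christoffel g l k i x * P x j l from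
      Finset.sum_congr rfl fun l _ => by rw [hPsym' x l j]]
    rw [show (∑ l, Christoffel g l k j x * P x i l) = ∑ l, Christoffel g l k j x * P x l i from
      Finset.sum_congr rfl fun l _ => by rw [hPsym' x i l]]
    ring
  have hCovFull : ∀ (x : Fin d → ℝ) (i a k : Fin d),
      CovD2 g P i a k x = CovD2 g P k a i x := fun x i a k => by
    rw [hCov23 x i a k, hCodazzi x i k a, hCov23 x k i a]
  -- index lowering
  have hlow : ∀ (x : Fin d → ℝ) (k i j : Fin d),
      (∑ l, Christoffel g l k i x * g x l j) = ChristoffelLow g k i j x := fun x k i j => by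
    simp only [Christoffel, Finset.sum_mul]
    rw [Finset.sum_comm]
    have h : ∀ a, (∑ l, (g x)⁻¹ l a * ChristoffelLow g k i a x * g x l j)
        = ((g x)⁻¹ * g x) a j * ChristoffelLow g k i a x := by
      intro a
      rw [Matrix.mul_apply, Finset.sum_mul]
      exact Finset.sum_congr rfl fun l _ => by rw [hgisym' x l a]; ring
    simp only [h, Matrix.nonsing_inv_mul _ (hgUdet x), Matrix.one_apply]
    simp
  -- covariant derivative identities in matrix form
  have hDg : ∀ (x : Fin d → ℝ) (k : Fin d),
      mpd k g x = (Cmat g k x)ᵀ * g x + g x * Cmat g k x := fun x k => by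
    ext i j
    simp only [mpd, Matrix.of_apply, Matrix.add_apply, Matrix.mul_apply, Matrix.transpose_apply,
      Cmat]
    have h1 : pd k (fun y => g y i j) x
        = ChristoffelLow g k i j x + ChristoffelLow g k j i x := by
      simp only [ChristoffelLow]
      rw [hpdg x k i j]
      ring
    have h2 : (∑ l, g x i l * Christoffel g l k j x) = ChristoffelLow g k j i x := by
      rw [← hlow x k j i]
      exact Finset.sum_congr rfl fun l _ => by rw [hgsym' x i l]; ring
    rw [h1, hlow x k i j, h2]
  have hDP : ∀ (x : Fin d → ℝ) (k : Fin d),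
      mpd k P x = Nmat g P k x + (Cmat g k x)ᵀ * P x + P x * Cmat g k x := fun x k => by
    ext i j
    simp only [mpd, Matrix.of_apply, Matrix.add_apply, Matrix.mul_apply, Matrix.transpose_apply,
      Cmat, Nmat, CovD2]
    rw [show (∑ l, P x i l * Christoffel g l k j x) = ∑ l, Christoffel g l k j x * P x i l from
      Finset.sum_congr rfl fun l _ => mul_comm _ _]
    ring
  have hDgi : ∀ (x : Fin d → ℝ) (k : Fin d),
      mpd k (fun y => (g y)⁻¹) x = -((g x)⁻¹ * mpd k g x * (g x)⁻¹) := fun x k => by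
    haveI := (g x).invertibleOfIsUnitDet (hgUdet x)
    have h0 : mpd k (fun y => g y * (g y)⁻¹) x = 0 := by
      rw [mpd_congr (fun y => Matrix.mul_nonsing_inv _ (hgUdet y)) k x, mpd_one]
    rw [mpd_mul hgE hgiE k x] at h0
    have h1 := congrArg (fun M => (g x)⁻¹ * M) h0
    simp only [Matrix.mul_add, ← Matrix.mul_assoc, Matrix.inv_mul_of_invertible,
      Matrix.one_mul, Matrix.mul_zero] at h1
    exact eq_neg_of_add_eq_zero_right h1
  have hDU : ∀ (x : Fin d → ℝ) (k : Fin d),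
      mpd k (Uf g P ρ) x = ρ • ((g x)⁻¹ * Nmat g P k x) + Uf g P ρ x * Cmat g k x
        - Cmat g k x * Uf g P ρ x := fun x k => by
    haveI := (g x).invertibleOfIsUnitDet (hgUdet x)
    rw [show mpd k (Uf g P ρ) x = mpd k (fun y => 1 + ρ • ((g y)⁻¹ * P y)) x from rfl]
    rw [mpd_one_add_smul hGPE ρ k x, mpd_mul hgiE hPE k x, hDgi x k, hDP x k, hDg x k]
    simp only [Uf, Matrix.add_mul, Matrix.mul_add, Matrix.sub_mul, Matrix.mul_sub,
      Matrix.neg_mul, Matrix.mul_neg, smul_mul_assoc, mul_smul_comm, smul_add, smul_sub,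
      smul_neg, neg_add, neg_neg, ← Matrix.mul_assoc, Matrix.inv_mul_of_invertible,
      Matrix.mul_inv_of_invertible, Matrix.one_mul, Matrix.mul_one,
      Matrix.mul_inv_cancel_right_of_invertible, Matrix.inv_mul_cancel_right_of_invertible]
    abel
  -- transpose identity for U
  have hGUGi : ∀ x : Fin d → ℝ, g x * Uf g P ρ x * (g x)⁻¹ = (Uf g P ρ x)ᵀ := fun x => by
    haveI := (g x).invertibleOfIsUnitDet (hgUdet x)
    simp only [Uf, Matrix.transpose_add, Matrix.transpose_smul, Matrix.transpose_one,
      Matrix.transpose_mul, hgisymm x, show (P x)ᵀ = P x from hPsym x,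
      Matrix.mul_add, Matrix.add_mul, Matrix.mul_one, Matrix.one_mul,
      mul_smul_comm, smul_mul_assoc, ← Matrix.mul_assoc, Matrix.mul_inv_of_invertible,
      Matrix.inv_mul_of_invertible, Matrix.mul_inv_cancel_right_of_invertible,
      Matrix.inv_mul_cancel_right_of_invertible]
  -- step A
  have StepA : ∀ (x : Fin d → ℝ) (k : Fin d),
      mpd k (Sf g P ρ) x = (Cmat g k x)ᵀ * Sf g P ρ x + Sf g P ρ x * Cmat g k x
        + ρ • (Nmat g P k x * Uf g P ρ x) + ρ • ((Uf g P ρ x)ᵀ * Nmat g P k x) := fun x k => by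
    haveI := (g x).invertibleOfIsUnitDet (hgUdet x)
    rw [show mpd k (Sf g P ρ) x
      = mpd k (fun y => (fun z => g z * Uf g P ρ z) y * Uf g P ρ y) x from rfl]
    rw [mpd_mul (hgE.mul hUE) hUE k x, mpd_mul hgE hUE k x, hDg x k, hDU x k]
    simp only [Sf, Uf, Matrix.transpose_add, Matrix.transpose_smul, Matrix.transpose_one,
      Matrix.transpose_mul, hgisymm x, show (P x)ᵀ = P x from hPsym x,
      show (g x)ᵀ = g x from hgsym x, Matrix.add_mul, Matrix.mul_add, Matrix.sub_mul,
      Matrix.mul_sub, smul_mul_assoc, mul_smul_comm, smul_add, smul_sub, smul_neg, neg_add,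
      Matrix.neg_mul, Matrix.mul_neg, neg_neg, ← Matrix.mul_assoc,
      Matrix.inv_mul_of_invertible, Matrix.mul_inv_of_invertible, Matrix.one_mul,
      Matrix.mul_one, Matrix.mul_inv_cancel_right_of_invertible,
      Matrix.inv_mul_cancel_right_of_invertible]
    abel
  -- structure of S
  have hS2 : ∀ x : Fin d → ℝ, Sf g P ρ x = (Uf g P ρ x)ᵀ * g x * Uf g P ρ x := fun x => by
    haveI := (g x).invertibleOfIsUnitDet (hgUdet x)
    rw [← hGUGi x, Matrix.inv_mul_cancel_right_of_invertible]
    rfl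
  have hVtS : ∀ x : Fin d → ℝ,
      ((Uf g P ρ x)⁻¹)ᵀ * Sf g P ρ x = g x * Uf g P ρ x := fun x => by
    haveI := (Uf g P ρ x).invertibleOfIsUnitDet (hU x)
    rw [hS2 x, Matrix.transpose_nonsing_inv,
      Matrix.mul_assoc ((Uf g P ρ x)ᵀ) (g x) (Uf g P ρ x), ← Matrix.mul_assoc,
      Matrix.inv_mul_of_invertible, Matrix.one_mul]
  have hSV : ∀ x : Fin d → ℝ,
      Sf g P ρ x * (Uf g P ρ x)⁻¹ = (Uf g P ρ x)ᵀ * g x := fun x => by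
    haveI := (Uf g P ρ x).invertibleOfIsUnitDet (hU x)
    rw [hS2 x, Matrix.mul_inv_cancel_right_of_invertible]
  have hNsym : ∀ (x : Fin d → ℝ) (k : Fin d), (Nmat g P k x)ᵀ = Nmat g P k x := fun x k => by
    ext i j
    simp only [Matrix.transpose_apply, Nmat, Matrix.of_apply]
    exact hCov23 x k j i
  have hA : ∀ (x : Fin d → ℝ) (k : Fin d),
      Nmat g P k x * (g x)⁻¹ * ((Uf g P ρ x)⁻¹)ᵀ * Sf g P ρ x
        = Nmat g P k x * Uf g P ρ x := fun x k => by
    haveI := (g x).invertibleOfIsUnitDet (hgUdet x)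
    rw [Matrix.mul_assoc (Nmat g P k x * (g x)⁻¹), hVtS x, ← Matrix.mul_assoc,
      Matrix.inv_mul_cancel_right_of_invertible]
  have hB : ∀ (x : Fin d → ℝ) (k : Fin d),
      Sf g P ρ x * (Uf g P ρ x)⁻¹ * (g x)⁻¹ * Nmat g P k x
        = (Uf g P ρ x)ᵀ * Nmat g P k x := fun x k => by
    haveI := (g x).invertibleOfIsUnitDet (hgUdet x)
    rw [hSV x, Matrix.mul_inv_cancel_right_of_invertible]
  have StepB : ∀ (x : Fin d → ℝ) (k : Fin d),
      (Fmat g P ρ k x)ᵀ * Sf g P ρ x + Sf g P ρ x * Fmat g P ρ k x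
        = (Cmat g k x)ᵀ * Sf g P ρ x + Sf g P ρ x * Cmat g k x
          + ρ • (Nmat g P k x * Uf g P ρ x)
          + ρ • ((Uf g P ρ x)ᵀ * Nmat g P k x) := fun x k => by
    have h1 : (Fmat g P ρ k x)ᵀ = (Cmat g k x)ᵀ
        + ρ • (Nmat g P k x * (g x)⁻¹ * ((Uf g P ρ x)⁻¹)ᵀ) := by
      simp only [Fmat, Matrix.transpose_add, Matrix.transpose_smul, Matrix.transpose_mul,
        hNsym x k, hgisymm x, ← Matrix.mul_assoc]
    rw [h1]
    simp only [Fmat, Matrix.add_mul, Matrix.mul_add, smul_mul_assoc, mul_smul_comm,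
      ← Matrix.mul_assoc, hA x k, hB x k]
    abel
  have hkey : ∀ (x : Fin d → ℝ) (k : Fin d),
      mpd k (Sf g P ρ) x
        = (Fmat g P ρ k x)ᵀ * Sf g P ρ x + Sf g P ρ x * Fmat g P ρ k x := fun x k =>
    (StepA x k).trans (StepB x k).symm
  have hpdS : ∀ (x : Fin d → ℝ) (m i j : Fin d),
      pd m (fun y => Sf g P ρ y i j) x
        = ((Fmat g P ρ m x)ᵀ * Sf g P ρ x + Sf g P ρ x * Fmat g P ρ m x) i j := fun x m i j =>
    congrFun (congrFun (hkey x m) i) j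
  have hSsymT : ∀ x : Fin d → ℝ, (Sf g P ρ x)ᵀ = Sf g P ρ x := fun x => by
    rw [hS2 x]
    simp only [Matrix.transpose_mul, Matrix.transpose_transpose,
      show (g x)ᵀ = g x from hgsym x, ← Matrix.mul_assoc]
  have hSsym' : ∀ (x : Fin d → ℝ) (a b : Fin d), Sf g P ρ x a b = Sf g P ρ x b a :=
    fun x => entsym _ (hSsymT x)
  have hFcol : ∀ (x : Fin d → ℝ) (a b l : Fin d),
      Fmat g P ρ a x l b = Fmat g P ρ b x l a := fun x a b l => by
    simp only [Fmat, Matrix.add_apply, Matrix.smul_apply, Cmat, Matrix.of_apply, smul_eq_mul]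
    rw [hChsym x l a b]
    congr 1
    have h : ((Uf g P ρ x)⁻¹ * ((g x)⁻¹ * Nmat g P a x)) l b
        = ((Uf g P ρ x)⁻¹ * ((g x)⁻¹ * Nmat g P b x)) l a := by
      simp only [Matrix.mul_apply, Nmat, Matrix.of_apply]
      refine Finset.sum_congr rfl fun l' _ => ?_
      congr 1
      refine Finset.sum_congr rfl fun c _ => ?_
      rw [hCovFull x a c b]
    rw [h]
  have hdetS : ∀ x : Fin d → ℝ, IsUnit ((Sf g P ρ x).det) := fun x => by
    simp only [Sf, Matrix.det_mul]
    exact ((hgUdet x).mul (hU x)).mul (hU x)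
  have hCLS : ∀ (x : Fin d → ℝ) (i j m : Fin d),
      ChristoffelLow (Sf g P ρ) i j m x
        = ∑ l, Fmat g P ρ i x l j * Sf g P ρ x l m := fun x i j m => by
    simp only [ChristoffelLow]
    rw [show (fun y => Sf g P ρ y j m) = fun y => Sf g P ρ y j m from rfl]
    rw [hpdS x i j m, hpdS x j i m, hpdS x m i j]
    simp only [Matrix.add_apply, Matrix.mul_apply, Matrix.transpose_apply]
    rw [show (∑ l, Fmat g P ρ j x l i * Sf g P ρ x l m)
        = ∑ l, Fmat g P ρ i x l j * Sf g P ρ x l m from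
      Finset.sum_congr rfl fun l _ => by rw [hFcol x j i l]]
    rw [show (∑ l, Sf g P ρ x j l * Fmat g P ρ i x l m)
        = ∑ l, Fmat g P ρ m x l i * Sf g P ρ x l j from
      Finset.sum_congr rfl fun l _ => by rw [hSsym' x j l, hFcol x i m l]; ring]
    rw [show (∑ l, Sf g P ρ x i l * Fmat g P ρ j x l m)
        = ∑ l, Fmat g P ρ m x l j * Sf g P ρ x l i from
      Finset.sum_congr rfl fun l _ => by rw [hSsym' x i l, hFcol x j m l]; ring]
    rw [show (∑ l, Sf g P ρ x i l * Fmat g P ρ m x l j)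
        = ∑ l, Fmat g P ρ m x l j * Sf g P ρ x l i from
      Finset.sum_congr rfl fun l _ => by rw [hSsym' x i l]; ring]
    ring
  have hChS : ∀ (x : Fin d → ℝ) (k i j : Fin d),
      Christoffel (Sf g P ρ) k i j x = Fmat g P ρ i x k j := fun x k i j => by
    simp only [Christoffel, hCLS]
    have h1 : ∀ m, (Sf g P ρ x)⁻¹ k m * ∑ l, Fmat g P ρ i x l j * Sf g P ρ x l m
        = ∑ l, Fmat g P ρ i x l j * ((Sf g P ρ x)⁻¹ k m * Sf g P ρ x m l) := fun m => by
      rw [Finset.mul_sum]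
      exact Finset.sum_congr rfl fun l _ => by rw [hSsym' x l m]; ring
    simp only [h1]
    rw [Finset.sum_comm]
    have h2 : ∀ l, (∑ m, Fmat g P ρ i x l j * ((Sf g P ρ x)⁻¹ k m * Sf g P ρ x m l))
        = Fmat g P ρ i x l j * ((Sf g P ρ x)⁻¹ * Sf g P ρ x) k l := fun l => by
      rw [← Finset.mul_sum, Matrix.mul_apply]
    simp only [h2, Matrix.nonsing_inv_mul _ (hdetS x), Matrix.one_apply]
    simp
  -- conversion of the statement coefficients to Fmat entries
  have hcoef : ∀ (x : Fin d → ℝ) (k b l : Fin d),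
      Christoffel g l k b x + ρ * ∑ l', (1 + ρ • ((g x)⁻¹ * P x))⁻¹ l l'
          * (∑ a, (g x)⁻¹ l' a * CovD2 g P b a k x)
        = Fmat g P ρ k x l b := fun x k b l => by
    simp only [Fmat, Uf, Matrix.add_apply, Matrix.smul_apply, smul_eq_mul, Cmat,
      Matrix.of_apply, Matrix.mul_apply, Nmat]
    congr 2
    refine Finset.sum_congr rfl fun l' _ => ?_
    congr 1
    refine Finset.sum_congr rfl fun a _ => ?_
    rw [hCovFull x b a k]
  refine ⟨?_, ?_, ?_⟩
  · -- torsion-free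
    intro x k i j
    rw [hChsym x k i j]
    congr 1
    congr 1
    refine Finset.sum_congr rfl fun l _ => ?_
    congr 1
    refine Finset.sum_congr rfl fun a _ => ?_
    rw [hCovFull x j a i]
  · -- metric compatibility
    intro x k i j
    show pd k (fun y => Sf g P ρ y i j) x
        - (∑ l, (Christoffel g l k i x
              + ρ * ∑ l', (1 + ρ • ((g x)⁻¹ * P x))⁻¹ l l'
                  * (∑ a, (g x)⁻¹ l' a * CovD2 g P i a k x)) * Sf g P ρ x l j)
        - (∑ l, (Christoffel g l k j x
              + ρ * ∑ l', (1 + ρ • ((g x)⁻¹ * P x))⁻¹ l l'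
                  * (∑ a, (g x)⁻¹ l' a * CovD2 g P j a k x)) * Sf g P ρ x i l)
        = 0
    simp only [hcoef x k]
    rw [hpdS x k i j]
    simp only [Matrix.add_apply, Matrix.mul_apply, Matrix.transpose_apply]
    rw [show (∑ l, Fmat g P ρ k x l j * Sf g P ρ x i l)
        = ∑ l, Sf g P ρ x i l * Fmat g P ρ k x l j from
      Finset.sum_congr rfl fun l _ => mul_comm _ _]
    ring
  · -- Levi-Civita
    intro x k i j
    rw [show (fun y => g y * (1 + ρ • ((g y)⁻¹ * P y)) * (1 + ρ • ((g y)⁻¹ * P y)))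
        = Sf g P ρ from rfl]
    rw [hChS x k i j]
    exact hcoef x i j k
end
end

section
/- For a metric of the form g̃ = 2ρ dt² + 2t dρ dt + t² g_ρ on ℝ₊ × M × (-ε,ε), the components of the Riemann curvature tensor with one index in the t-direction vanish: R̃_{IJK0} = 0; moreover R̃_{∞jk∞} = (t²/2)[(g_ρ'')_{jk} - ½ (g_ρ)^{pq}(g_ρ')_{jp}(g_ρ')_{kq}], where ' = ∂_ρ and ∞ denotes the ρ-direction. -/
open Matrix BigOperators

noncomputable section

section AuxIdx
variable {d : ℕ}

lemma emb_ne_zero (i : Fin d) : emb i ≠ 0 := by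
  simp [emb, Fin.ext_iff]

lemma zero_ne_emb (i : Fin d) : (0 : Fin (d+2)) ≠ emb i := (emb_ne_zero i).symm

lemma emb_ne_last (i : Fin d) : emb i ≠ Fin.last (d+1) := by
  have := i.isLt
  simp [emb, Fin.ext_iff]
  omega

lemma last_ne_emb (i : Fin d) : Fin.last (d+1) ≠ emb i := (emb_ne_last i).symm

lemma zero_ne_last : (0 : Fin (d+2)) ≠ Fin.last (d+1) := by
  simp [Fin.ext_iff]

lemma last_ne_zero : (Fin.last (d+1) : Fin (d+2)) ≠ 0 := zero_ne_last.symm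

lemma emb_inj {i j : Fin d} : emb i = emb j ↔ i = j := by
  simp [emb, Fin.ext_iff]

lemma fin_cases3 (I : Fin (d+2)) : I = 0 ∨ I = Fin.last (d+1) ∨ ∃ i : Fin d, I = emb i := by
  by_cases h0 : I = 0
  · exact Or.inl h0
  by_cases hl : I = Fin.last (d+1)
  · exact Or.inr (Or.inl hl)
  refine Or.inr (Or.inr ?_)
  have h0' : I.val ≠ 0 := fun h => h0 (Fin.ext h)
  have hl' : I.val ≠ d + 1 := fun h => hl (Fin.ext h)
  have hlt := I.isLt
  refine ⟨⟨I.val - 1, by omega⟩, ?_⟩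
  simp [emb, Fin.ext_iff]
  omega

lemma sum_split (F : Fin (d+2) → ℝ) :
    ∑ K, F K = F 0 + (∑ i, F (emb i)) + F (Fin.last (d+1)) := by
  rw [Fin.sum_univ_succ, Fin.sum_univ_castSucc]
  simp only [Fin.succ_castSucc, Fin.succ_last, emb]
  ring

end AuxIdx

section AuxPd
variable {n : ℕ}
open Filter

lemma pd_congr {f g : (Fin n → ℝ) → ℝ} {x : Fin n → ℝ} (i : Fin n)
    (h : f =ᶠ[nhds x] g) : pd i f x = pd i g x := by
  unfold pd; rw [h.fderiv_eq]

lemma pd_hasFDerivAt {f : (Fin n → ℝ) → ℝ} {x : Fin n → ℝ}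
    {L : (Fin n → ℝ) →L[ℝ] ℝ} (i : Fin n)
    (h : HasFDerivAt f L x) : pd i f x = L (Pi.single i 1) := by
  unfold pd; rw [h.fderiv]

lemma pd_const (i : Fin n) (c : ℝ) (x : Fin n → ℝ) : pd i (fun _ => c) x = 0 := by
  unfold pd; simp

lemma pd_mul {f g : (Fin n → ℝ) → ℝ} {x : Fin n → ℝ} (i : Fin n)
    (hf : DifferentiableAt ℝ f x) (hg : DifferentiableAt ℝ g x) :
    pd i (fun y => f y * g y) x = pd i f x * g x + f x * pd i g x := by
  unfold pd
  rw [fderiv_fun_mul hf hg]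
  simp
  ring

lemma diff_coord (K : Fin n) (x : Fin n → ℝ) :
    DifferentiableAt ℝ (fun y : Fin n → ℝ => y K) x :=
  (ContinuousLinearMap.proj (R := ℝ) (φ := fun _ : Fin n => ℝ) K).differentiableAt

lemma pd_coord (i K : Fin n) (x : Fin n → ℝ) :
    pd i (fun y => y K) x = if K = i then 1 else 0 := by
  have h : HasFDerivAt (fun y : Fin n → ℝ => y K)
      (ContinuousLinearMap.proj (R := ℝ) (φ := fun _ : Fin n => ℝ) K) x :=
    (ContinuousLinearMap.proj (R := ℝ) (φ := fun _ : Fin n => ℝ) K).hasFDerivAt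
  rw [pd_hasFDerivAt i h]
  simp [Pi.single_apply]

lemma pd_comp_indep (i : Fin n) (f : (Fin n → ℝ) → ℝ) (x : Fin n → ℝ)
    (h : ∀ s : ℝ, f (x + s • (Pi.single i 1 : Fin n → ℝ)) = f x) : pd i f x = 0 := by
  unfold pd
  by_cases hd : DifferentiableAt ℝ f x
  · have hline : HasDerivAt (fun s : ℝ => x + s • (Pi.single i 1 : Fin n → ℝ))
        (Pi.single i 1 : Fin n → ℝ) 0 := by
      simpa using ((hasDerivAt_id (0:ℝ)).smul_const
        (Pi.single i 1 : Fin n → ℝ)).const_add x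
    have h0 : HasFDerivAt f (fderiv ℝ f x)
        (x + (0:ℝ) • (Pi.single i 1 : Fin n → ℝ)) := by simpa using hd.hasFDerivAt
    have hcomp := h0.comp_hasDerivAt (x := (0:ℝ)) hline
    rw [show (f ∘ fun s : ℝ => x + s • (Pi.single i 1 : Fin n → ℝ)) = fun _ => f x
      from funext fun s => h s] at hcomp
    have := hcomp.unique (hasDerivAt_const 0 (f x))
    simpa using this
  · rw [fderiv_zero_of_not_differentiableAt hd]; rfl

end AuxPd

section AuxPhi
variable {d : ℕ}

def phiL (d : ℕ) : ((Fin (d+2)) → ℝ) →L[ℝ] ℝ × (Fin d → ℝ) :=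
  (ContinuousLinearMap.proj (Fin.last (d+1))).prod
    (ContinuousLinearMap.pi fun i => ContinuousLinearMap.proj (emb i))

lemma phiL_apply (y : Fin (d+2) → ℝ) : phiL d y = (y (Fin.last (d+1)), mcoord y) := rfl

lemma phiL_single_zero : phiL d (Pi.single (0 : Fin (d+2)) (1:ℝ)) = 0 := by
  rw [phiL_apply]
  refine Prod.ext ?_ ?_
  · simp [Pi.single_apply, last_ne_zero]
  · simp only [Prod.snd_zero]
    funext i
    simp [mcoord, Pi.single_apply, emb_ne_zero]

lemma phiL_single_last : phiL d (Pi.single (Fin.last (d+1)) (1:ℝ)) = ((1:ℝ), 0) := by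
  rw [phiL_apply]
  refine Prod.ext ?_ ?_
  · simp
  · funext i
    simp [mcoord, Pi.single_apply, emb_ne_last]

lemma phiL_single_emb (k : Fin d) :
    phiL d (Pi.single (emb k) (1:ℝ)) = ((0:ℝ), Pi.single k 1) := by
  rw [phiL_apply]
  refine Prod.ext ?_ ?_
  · simp [Pi.single_apply, last_ne_emb]
  · funext i
    simp [mcoord, Pi.single_apply, emb_inj]

lemma pd_comp_phiL {x : Fin (d+2) → ℝ} (F : ℝ × (Fin d → ℝ) → ℝ)
    (hF : DifferentiableAt ℝ F (phiL d x)) (I : Fin (d+2)) :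
    pd I (fun y => F (phiL d y)) x = fderiv ℝ F (phiL d x) (phiL d (Pi.single I 1)) := by
  have h : HasFDerivAt (fun y => F (phiL d y))
      ((fderiv ℝ F (phiL d x)).comp (phiL d : (Fin (d+2) → ℝ) →L[ℝ] ℝ × (Fin d → ℝ))) x :=
    hF.hasFDerivAt.comp x (phiL d).hasFDerivAt
  rw [pd_hasFDerivAt I h]
  rfl

lemma pd_zero_comp_phiL (x : Fin (d+2) → ℝ) (F : ℝ × (Fin d → ℝ) → ℝ) :
    pd 0 (fun y => F (phiL d y)) x = 0 := by
  apply pd_comp_indep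
  intro s
  congr 1
  rw [map_add, _root_.map_smul, phiL_single_zero]
  simp

end AuxPhi


section AuxG
variable {d : ℕ} (gf : ℝ → (Fin d → ℝ) → Matrix (Fin d) (Fin d) ℝ)

def Gfun (i j : Fin d) : ℝ × (Fin d → ℝ) → ℝ := fun p => gf p.1 p.2 i j

def GP (i j : Fin d) : ℝ × (Fin d → ℝ) → ℝ := fun p => fderiv ℝ (Gfun gf i j) p (1, 0)

def GPP (i j : Fin d) : ℝ × (Fin d → ℝ) → ℝ := fun p => fderiv ℝ (GP gf i j) p (1, 0)

def DM (k i j : Fin d) : ℝ × (Fin d → ℝ) → ℝ := fun p => fderiv ℝ (Gfun gf i j) p (0, Pi.single k 1)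

variable (hgs : ∀ i j, ContDiff ℝ (⊤ : ℕ∞) fun p : ℝ × (Fin d → ℝ) => gf p.1 p.2 i j)

include hgs in
lemma gfun_cd (i j : Fin d) : ContDiff ℝ (⊤ : ℕ∞) (Gfun gf i j) := hgs i j

include hgs in
lemma gfun_diff (i j : Fin d) (p : ℝ × (Fin d → ℝ)) : DifferentiableAt ℝ (Gfun gf i j) p :=
  ((gfun_cd gf hgs i j).differentiable (by simp)).differentiableAt

include hgs in
lemma gp_cd (i j : Fin d) : ContDiff ℝ (⊤ : ℕ∞) (GP gf i j) :=
  (((gfun_cd gf hgs i j).fderiv_right (by simp)).clm_apply contDiff_const : _)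

include hgs in
lemma gp_diff (i j : Fin d) (p : ℝ × (Fin d → ℝ)) : DifferentiableAt ℝ (GP gf i j) p :=
  ((gp_cd gf hgs i j).differentiable (by simp)).differentiableAt

lemma deriv_slice (F : ℝ × (Fin d → ℝ) → ℝ) (a : ℝ) (v : Fin d → ℝ)
    (hF : DifferentiableAt ℝ F (a, v)) :
    deriv (fun r => F (r, v)) a = fderiv ℝ F (a, v) (1, 0) := by
  have h : HasDerivAt (fun r : ℝ => (r, v)) ((1:ℝ), (0 : Fin d → ℝ)) a :=
    (hasDerivAt_id a).prodMk (hasDerivAt_const a v)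
  have := hF.hasFDerivAt.comp_hasDerivAt a h
  exact this.deriv

include hgs in
lemma gp_eq_deriv (i j : Fin d) (a : ℝ) (v : Fin d → ℝ) :
    GP gf i j (a, v) = deriv (fun r => gf r v i j) a :=
  (deriv_slice (Gfun gf i j) a v (gfun_diff gf hgs i j _)).symm

include hgs in
lemma gpp_eq_deriv (i j : Fin d) (a : ℝ) (v : Fin d → ℝ) :
    GPP gf i j (a, v) = deriv (fun r => deriv (fun s => gf s v i j) r) a := by
  have h1 : (fun r => deriv (fun s => gf s v i j) r) = fun r => GP gf i j (r, v) := by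
    funext r
    exact (gp_eq_deriv gf hgs i j r v).symm
  rw [h1]
  exact (deriv_slice (GP gf i j) a v (gp_diff gf hgs i j _)).symm

lemma gf_symm (hgsym : ∀ ρ y, (gf ρ y).IsSymm) (r : ℝ) (v : Fin d → ℝ) (i j : Fin d) :
    gf r v i j = gf r v j i := (hgsym r v).apply j i

lemma gfun_symm (hgsym : ∀ ρ y, (gf ρ y).IsSymm) (i j : Fin d) :
    Gfun gf i j = Gfun gf j i := by
  funext p; exact gf_symm gf hgsym _ _ i j

lemma ginv_symm (hgsym : ∀ ρ y, (gf ρ y).IsSymm) (r : ℝ) (v : Fin d → ℝ) (i j : Fin d) :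
    (gf r v)⁻¹ i j = (gf r v)⁻¹ j i := by
  have h : ((gf r v)⁻¹).IsSymm := by
    show ((gf r v)⁻¹)ᵀ = (gf r v)⁻¹
    rw [Matrix.transpose_nonsing_inv, (hgsym r v)]
  exact Matrix.IsSymm.apply h j i

end AuxG

section AuxBlk
variable {d : ℕ}

def blk (a b e c : ℝ) (m : Matrix (Fin d) (Fin d) ℝ) : Matrix (Fin (d+2)) (Fin (d+2)) ℝ :=
  Matrix.of fun I J =>
    (if I = 0 ∧ J = 0 then a else 0)
      + (if (I = 0 ∧ J = Fin.last (d+1)) ∨ (I = Fin.last (d+1) ∧ J = 0) then b else 0)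
      + (if I = Fin.last (d+1) ∧ J = Fin.last (d+1) then e else 0)
      + c * ∑ i, ∑ j, (if I = emb i ∧ J = emb j then m i j else 0)

variable {a b e c : ℝ} {m : Matrix (Fin d) (Fin d) ℝ}

lemma emb_sum_zero_left {I J : Fin (d+2)} (h : ∀ i : Fin d, I ≠ emb i) :
    ∑ i, ∑ j, (if I = emb i ∧ J = emb j then m i j else 0) = 0 := by
  apply Finset.sum_eq_zero; intro i _
  apply Finset.sum_eq_zero; intro j _
  simp [h i]

lemma emb_sum_zero_right {I J : Fin (d+2)} (h : ∀ j : Fin d, J ≠ emb j) :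
    ∑ i, ∑ j, (if I = emb i ∧ J = emb j then m i j else 0) = 0 := by
  apply Finset.sum_eq_zero; intro i _
  apply Finset.sum_eq_zero; intro j _
  simp [h j]

lemma emb_sum_eq (p q : Fin d) :
    ∑ i, ∑ j, (if emb p = emb i ∧ emb q = emb j then m i j else 0) = m p q := by
  rw [Finset.sum_eq_single p]
  · rw [Finset.sum_eq_single q]
    · simp
    · intro j _ hj
      rw [if_neg]
      rintro ⟨-, h2⟩
      exact hj (emb_inj.mp h2).symm
    · intro h; exact absurd (Finset.mem_univ q) h
  · intro i _ hi
    apply Finset.sum_eq_zero; intro j _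
    rw [if_neg]
    rintro ⟨h1, -⟩
    exact hi (emb_inj.mp h1).symm
  · intro h; exact absurd (Finset.mem_univ p) h

lemma blk_app_00 : blk a b e c m 0 0 = a := by
  simp [blk, emb_sum_zero_left (fun i => zero_ne_emb i), zero_ne_last]

lemma blk_app_0l : blk a b e c m 0 (Fin.last (d+1)) = b := by
  simp [blk, emb_sum_zero_left (fun i => zero_ne_emb i), zero_ne_last, last_ne_zero]

lemma blk_app_l0 : blk a b e c m (Fin.last (d+1)) 0 = b := by
  simp [blk, emb_sum_zero_left (fun i => last_ne_emb i), zero_ne_last, last_ne_zero]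

lemma blk_app_ll : blk a b e c m (Fin.last (d+1)) (Fin.last (d+1)) = e := by
  simp [blk, emb_sum_zero_left (fun i => last_ne_emb i), last_ne_zero]

lemma blk_app_0e (j : Fin d) : blk a b e c m 0 (emb j) = 0 := by
  simp [blk, emb_sum_zero_left (fun i => zero_ne_emb i), zero_ne_last, zero_ne_emb,
    (emb_ne_last j), (emb_ne_zero j)]

lemma blk_app_e0 (i : Fin d) : blk a b e c m (emb i) 0 = 0 := by
  simp [blk, emb_sum_zero_right (fun j => zero_ne_emb j), emb_ne_zero, emb_ne_last, last_ne_zero]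

lemma blk_app_le (j : Fin d) : blk a b e c m (Fin.last (d+1)) (emb j) = 0 := by
  simp [blk, emb_sum_zero_left (fun i => last_ne_emb i), last_ne_zero, emb_ne_zero, emb_ne_last]

lemma blk_app_el (i : Fin d) : blk a b e c m (emb i) (Fin.last (d+1)) = 0 := by
  simp [blk, emb_sum_zero_right (fun j => last_ne_emb j), emb_ne_zero, emb_ne_last, zero_ne_last]

lemma blk_app_ee (p q : Fin d) : blk a b e c m (emb p) (emb q) = c * m p q := by
  simp [blk, emb_sum_eq, emb_ne_zero, emb_ne_last]

end AuxBlk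

section AuxAmb
variable {d : ℕ} (gf : ℝ → (Fin d → ℝ) → Matrix (Fin d) (Fin d) ℝ)

lemma amb_eq_blk (x : Fin (d+2) → ℝ) :
    ambMetric gf x
      = blk (2 * x (Fin.last (d+1))) (x 0) 0 ((x 0)^2)
          (gf (x (Fin.last (d+1))) (mcoord x)) := by
  ext I J
  simp [ambMetric, blk]

lemma amb_inv_eq (hgpos : ∀ ρ y, (gf ρ y).PosDef) (x : Fin (d+2) → ℝ) (hx : x 0 ≠ 0) :
    (ambMetric gf x)⁻¹
      = blk 0 (x 0)⁻¹ (-2 * x (Fin.last (d+1)) / (x 0)^2) (((x 0)^2)⁻¹)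
          (gf (x (Fin.last (d+1))) (mcoord x))⁻¹ := by
  apply Matrix.inv_eq_right_inv
  rw [amb_eq_blk]
  have hg := hgpos (x (Fin.last (d+1))) (mcoord x)
  have hdet : IsUnit (gf (x (Fin.last (d+1))) (mcoord x)).det :=
    isUnit_iff_ne_zero.mpr (ne_of_gt hg.det_pos)
  have hmul := Matrix.mul_nonsing_inv _ hdet
  ext I J
  rw [Matrix.mul_apply, sum_split]
  rcases fin_cases3 I with hI | hI | ⟨i, hI⟩ <;> subst hI <;>
    rcases fin_cases3 J with hJ | hJ | ⟨j, hJ⟩ <;> subst hJ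
  · simp [blk_app_00, blk_app_0l, blk_app_l0, blk_app_0e, blk_app_e0, Matrix.one_apply,
      zero_ne_last, hx]
  · simp only [blk_app_00, blk_app_0l, blk_app_l0, blk_app_ll, blk_app_0e, blk_app_el]
    rw [Matrix.one_apply_ne zero_ne_last]
    field_simp
    simp
  · simp [blk_app_00, blk_app_0e, blk_app_0l, blk_app_le, blk_app_ee, blk_app_el,
      Matrix.one_apply, zero_ne_emb, Ne.symm (emb_ne_zero j)]
  · simp only [blk_app_l0, blk_app_00, blk_app_le, blk_app_e0, blk_app_ll, blk_app_0l]
    rw [Matrix.one_apply_ne last_ne_zero]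
    simp
  · simp only [blk_app_l0, blk_app_0l, blk_app_le, blk_app_el, blk_app_ll]
    rw [Matrix.one_apply_eq]
    field_simp; simp
  · simp [blk_app_l0, blk_app_0e, blk_app_le, blk_app_ee, blk_app_el, blk_app_ll,
      Matrix.one_apply, Ne.symm (emb_ne_last j), last_ne_emb]
  · simp [blk_app_e0, blk_app_00, blk_app_ee, blk_app_el, blk_app_l0, blk_app_0e,
      Matrix.one_apply, emb_ne_zero]
  · simp [blk_app_e0, blk_app_0l, blk_app_ee, blk_app_el, blk_app_ll,
      Matrix.one_apply, emb_ne_last]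
  · simp only [blk_app_e0, blk_app_0e, blk_app_ee, blk_app_el, blk_app_le]
    have hsum : ∑ k, (x 0)^2 * gf (x (Fin.last (d+1))) (mcoord x) i k
        * (((x 0)^2)⁻¹ * (gf (x (Fin.last (d+1))) (mcoord x))⁻¹ k j)
        = ∑ k, gf (x (Fin.last (d+1))) (mcoord x) i k
            * (gf (x (Fin.last (d+1))) (mcoord x))⁻¹ k j := by
      apply Finset.sum_congr rfl
      intro k _
      have h2 : (x 0)^2 ≠ 0 := pow_ne_zero 2 hx
      rw [show (x 0)^2 * gf (x (Fin.last (d+1))) (mcoord x) i k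
          * (((x 0)^2)⁻¹ * (gf (x (Fin.last (d+1))) (mcoord x))⁻¹ k j)
          = ((x 0)^2 * ((x 0)^2)⁻¹)
            * (gf (x (Fin.last (d+1))) (mcoord x) i k
              * (gf (x (Fin.last (d+1))) (mcoord x))⁻¹ k j) from by ring,
        mul_inv_cancel₀ h2, one_mul]
    rw [mul_zero, zero_add, add_zero, hsum]
    rw [show (∑ k, gf (x (Fin.last (d+1))) (mcoord x) i k
        * (gf (x (Fin.last (d+1))) (mcoord x))⁻¹ k j)
        = (gf (x (Fin.last (d+1))) (mcoord x) * (gf (x (Fin.last (d+1))) (mcoord x))⁻¹) i j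
        from (Matrix.mul_apply).symm, hmul]
    simp [Matrix.one_apply, emb_inj]

end AuxAmb


section AuxPdAmb
variable {d : ℕ} (gf : ℝ → (Fin d → ℝ) → Matrix (Fin d) (Fin d) ℝ)
  (hgs : ∀ i j, ContDiff ℝ (⊤ : ℕ∞) fun p : ℝ × (Fin d → ℝ) => gf p.1 p.2 i j)

lemma ambF_00 : (fun y => ambMetric gf y 0 0) = fun y : Fin (d+2) → ℝ => 2 * y (Fin.last (d+1)) := by
  funext y; rw [amb_eq_blk, blk_app_00]

lemma ambF_0l : (fun y => ambMetric gf y 0 (Fin.last (d+1))) = fun y : Fin (d+2) → ℝ => y 0 := by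
  funext y; rw [amb_eq_blk, blk_app_0l]

lemma ambF_l0 : (fun y => ambMetric gf y (Fin.last (d+1)) 0) = fun y : Fin (d+2) → ℝ => y 0 := by
  funext y; rw [amb_eq_blk, blk_app_l0]

lemma ambF_ll : (fun y => ambMetric gf y (Fin.last (d+1)) (Fin.last (d+1))) = fun _ : Fin (d+2) → ℝ => (0:ℝ) := by
  funext y; rw [amb_eq_blk, blk_app_ll]

lemma ambF_0e (j : Fin d) : (fun y => ambMetric gf y 0 (emb j)) = fun _ : Fin (d+2) → ℝ => (0:ℝ) := by
  funext y; rw [amb_eq_blk, blk_app_0e]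

lemma ambF_e0 (i : Fin d) : (fun y => ambMetric gf y (emb i) 0) = fun _ : Fin (d+2) → ℝ => (0:ℝ) := by
  funext y; rw [amb_eq_blk, blk_app_e0]

lemma ambF_le (j : Fin d) : (fun y => ambMetric gf y (Fin.last (d+1)) (emb j)) = fun _ : Fin (d+2) → ℝ => (0:ℝ) := by
  funext y; rw [amb_eq_blk, blk_app_le]

lemma ambF_el (i : Fin d) : (fun y => ambMetric gf y (emb i) (Fin.last (d+1))) = fun _ : Fin (d+2) → ℝ => (0:ℝ) := by
  funext y; rw [amb_eq_blk, blk_app_el]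

lemma ambF_ee (i j : Fin d) :
    (fun y => ambMetric gf y (emb i) (emb j))
      = fun y : Fin (d+2) → ℝ => (y 0)^2 * Gfun gf i j (phiL d y) := by
  funext y; rw [amb_eq_blk, blk_app_ee]; rfl

variable {x : Fin (d+2) → ℝ}

lemma pd_amb_00 (I : Fin (d+2)) :
    pd I (fun y => ambMetric gf y 0 0) x = 2 * (if Fin.last (d+1) = I then 1 else 0) := by
  rw [ambF_00]
  rw [pd_mul I (differentiableAt_const 2) (diff_coord _ x), pd_const, pd_coord]
  ring

lemma pd_amb_0l (I : Fin (d+2)) :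
    pd I (fun y => ambMetric gf y 0 (Fin.last (d+1))) x = if (0:Fin (d+2)) = I then 1 else 0 := by
  rw [ambF_0l, pd_coord]

lemma pd_amb_l0 (I : Fin (d+2)) :
    pd I (fun y => ambMetric gf y (Fin.last (d+1)) 0) x = if (0:Fin (d+2)) = I then 1 else 0 := by
  rw [ambF_l0, pd_coord]

lemma pd_amb_ll (I : Fin (d+2)) :
    pd I (fun y => ambMetric gf y (Fin.last (d+1)) (Fin.last (d+1))) x = 0 := by
  rw [ambF_ll, pd_const]

lemma pd_amb_0e (j : Fin d) (I : Fin (d+2)) :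
    pd I (fun y => ambMetric gf y 0 (emb j)) x = 0 := by
  rw [ambF_0e, pd_const]

lemma pd_amb_e0 (i : Fin d) (I : Fin (d+2)) :
    pd I (fun y => ambMetric gf y (emb i) 0) x = 0 := by
  rw [ambF_e0, pd_const]

lemma pd_amb_le (j : Fin d) (I : Fin (d+2)) :
    pd I (fun y => ambMetric gf y (Fin.last (d+1)) (emb j)) x = 0 := by
  rw [ambF_le, pd_const]

lemma pd_amb_el (i : Fin d) (I : Fin (d+2)) :
    pd I (fun y => ambMetric gf y (emb i) (Fin.last (d+1))) x = 0 := by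
  rw [ambF_el, pd_const]

include hgs in
lemma pd_amb_ee (i j : Fin d) (I : Fin (d+2)) :
    pd I (fun y => ambMetric gf y (emb i) (emb j)) x
      = (if (0:Fin (d+2)) = I then 1 else 0) * (2 * x 0 * Gfun gf i j (phiL d x))
        + (x 0)^2 * fderiv ℝ (Gfun gf i j) (phiL d x) (phiL d (Pi.single I 1)) := by
  rw [ambF_ee]
  have hg : DifferentiableAt ℝ (fun y => Gfun gf i j (phiL d y)) x :=
    (gfun_diff gf hgs i j (phiL d x)).comp x (phiL d).differentiableAt
  have h2 : (fun y : Fin (d+2) → ℝ => (y 0)^2 * Gfun gf i j (phiL d y))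
      = fun y => y 0 * (y 0 * Gfun gf i j (phiL d y)) := by
    funext y; ring
  rw [h2, pd_mul I (diff_coord 0 x) ((diff_coord 0 x).fun_mul hg),
    pd_mul I (diff_coord 0 x) hg, pd_coord,
    pd_comp_phiL (Gfun gf i j) (gfun_diff gf hgs i j _) I]
  ring

include hgs in
lemma pd_amb_ee_0 (i j : Fin d) :
    pd 0 (fun y => ambMetric gf y (emb i) (emb j)) x = 2 * x 0 * Gfun gf i j (phiL d x) := by
  rw [pd_amb_ee gf hgs, phiL_single_zero]
  simp

include hgs in
lemma pd_amb_ee_l (i j : Fin d) :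
    pd (Fin.last (d+1)) (fun y => ambMetric gf y (emb i) (emb j)) x
      = (x 0)^2 * GP gf i j (phiL d x) := by
  rw [pd_amb_ee gf hgs, phiL_single_last]
  simp [GP, zero_ne_last]

include hgs in
lemma pd_amb_ee_e (i j k : Fin d) :
    pd (emb k) (fun y => ambMetric gf y (emb i) (emb j)) x
      = (x 0)^2 * DM gf k i j (phiL d x) := by
  rw [pd_amb_ee gf hgs, phiL_single_emb]
  simp [DM, zero_ne_emb]

end AuxPdAmb

section AuxClow
variable {d : ℕ} (gf : ℝ → (Fin d → ℝ) → Matrix (Fin d) (Fin d) ℝ)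
  (hgs : ∀ i j, ContDiff ℝ (⊤ : ℕ∞) fun p : ℝ × (Fin d → ℝ) => gf p.1 p.2 i j)
  {x : Fin (d+2) → ℝ}

lemma clow_00_0 : ChristoffelLow (ambMetric gf) 0 0 0 x = 0 := by
  unfold ChristoffelLow
  rw [pd_amb_00]
  simp [zero_ne_last]

lemma clow_00_l : ChristoffelLow (ambMetric gf) 0 0 (Fin.last (d+1)) x = 0 := by
  unfold ChristoffelLow
  rw [pd_amb_0l, pd_amb_00]
  norm_num

lemma clow_00_e (k : Fin d) : ChristoffelLow (ambMetric gf) 0 0 (emb k) x = 0 := by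
  unfold ChristoffelLow
  rw [pd_amb_0e, pd_amb_00]
  simp [Ne.symm (emb_ne_last k)]

lemma clow_0l_0 : ChristoffelLow (ambMetric gf) 0 (Fin.last (d+1)) 0 x = 1 := by
  unfold ChristoffelLow
  rw [pd_amb_l0, pd_amb_00, pd_amb_0l]
  simp [last_ne_zero]

lemma clow_0l_l : ChristoffelLow (ambMetric gf) 0 (Fin.last (d+1)) (Fin.last (d+1)) x = 0 := by
  unfold ChristoffelLow
  rw [pd_amb_ll, pd_amb_0l]
  simp

lemma clow_0l_e (k : Fin d) :
    ChristoffelLow (ambMetric gf) 0 (Fin.last (d+1)) (emb k) x = 0 := by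
  unfold ChristoffelLow
  rw [pd_amb_le, pd_amb_0e, pd_amb_0l]
  simp [Ne.symm (emb_ne_zero k)]

lemma clow_0e_0 (j : Fin d) : ChristoffelLow (ambMetric gf) 0 (emb j) 0 x = 0 := by
  unfold ChristoffelLow
  rw [pd_amb_e0, pd_amb_00, pd_amb_0e]
  simp [Ne.symm (emb_ne_last j)]

lemma clow_0e_l (j : Fin d) :
    ChristoffelLow (ambMetric gf) 0 (emb j) (Fin.last (d+1)) x = 0 := by
  unfold ChristoffelLow
  rw [pd_amb_el, pd_amb_0l, pd_amb_0e]
  simp [Ne.symm (emb_ne_zero j)]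

include hgs in
lemma clow_0e_e (j k : Fin d) :
    ChristoffelLow (ambMetric gf) 0 (emb j) (emb k) x = x 0 * Gfun gf j k (phiL d x) := by
  unfold ChristoffelLow
  rw [pd_amb_ee_0 gf hgs, pd_amb_0e, pd_amb_0e]
  ring

lemma clow_ll_0 : ChristoffelLow (ambMetric gf) (Fin.last (d+1)) (Fin.last (d+1)) 0 x = 0 := by
  unfold ChristoffelLow
  rw [pd_amb_l0, pd_amb_ll]
  simp [last_ne_zero]

lemma clow_ll_l : ChristoffelLow (ambMetric gf) (Fin.last (d+1)) (Fin.last (d+1)) (Fin.last (d+1)) x = 0 := by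
  unfold ChristoffelLow
  rw [pd_amb_ll]
  simp

lemma clow_ll_e (k : Fin d) :
    ChristoffelLow (ambMetric gf) (Fin.last (d+1)) (Fin.last (d+1)) (emb k) x = 0 := by
  unfold ChristoffelLow
  rw [pd_amb_le, pd_amb_ll]
  simp

lemma clow_le_0 (j : Fin d) :
    ChristoffelLow (ambMetric gf) (Fin.last (d+1)) (emb j) 0 x = 0 := by
  unfold ChristoffelLow
  rw [pd_amb_e0, pd_amb_l0, pd_amb_le]
  simp [Ne.symm (emb_ne_zero j)]

lemma clow_le_l (j : Fin d) :
    ChristoffelLow (ambMetric gf) (Fin.last (d+1)) (emb j) (Fin.last (d+1)) x = 0 := by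
  unfold ChristoffelLow
  rw [pd_amb_el, pd_amb_ll, pd_amb_le]
  simp

include hgs in
lemma clow_le_e (j k : Fin d) :
    ChristoffelLow (ambMetric gf) (Fin.last (d+1)) (emb j) (emb k) x
      = (x 0)^2 * GP gf j k (phiL d x) / 2 := by
  unfold ChristoffelLow
  rw [pd_amb_ee_l gf hgs, pd_amb_le, pd_amb_le]
  ring

include hgs in
lemma clow_ee_0 (i j : Fin d) :
    ChristoffelLow (ambMetric gf) (emb i) (emb j) 0 x = -(x 0) * Gfun gf i j (phiL d x) := by
  unfold ChristoffelLow
  rw [pd_amb_e0, pd_amb_e0, pd_amb_ee_0 gf hgs]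
  ring

include hgs in
lemma clow_ee_l (i j : Fin d) :
    ChristoffelLow (ambMetric gf) (emb i) (emb j) (Fin.last (d+1)) x
      = -(x 0)^2 * GP gf i j (phiL d x) / 2 := by
  unfold ChristoffelLow
  rw [pd_amb_el, pd_amb_el, pd_amb_ee_l gf hgs]
  ring

include hgs in
lemma clow_ee_e (i j k : Fin d) :
    ChristoffelLow (ambMetric gf) (emb i) (emb j) (emb k) x
      = (x 0)^2 * (DM gf i j k (phiL d x) + DM gf j i k (phiL d x)
          - DM gf k i j (phiL d x)) / 2 := by
  unfold ChristoffelLow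
  rw [pd_amb_ee_e gf hgs, pd_amb_ee_e gf hgs, pd_amb_ee_e gf hgs]
  ring

end AuxClow

section AuxChr
variable {d : ℕ} (gf : ℝ → (Fin d → ℝ) → Matrix (Fin d) (Fin d) ℝ)

def GAM (l i j : Fin d) : ℝ × (Fin d → ℝ) → ℝ := fun p =>
  ∑ k, (gf p.1 p.2)⁻¹ l k * ((DM gf i j k p + DM gf j i k p - DM gf k i j p) / 2)

def CLE (l j : Fin d) : ℝ × (Fin d → ℝ) → ℝ := fun p =>
  (∑ k, (gf p.1 p.2)⁻¹ l k * GP gf j k p) / 2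

def CEE (i j : Fin d) : ℝ × (Fin d → ℝ) → ℝ := fun p =>
  -(Gfun gf i j p) + p.1 * GP gf i j p

variable (hgs : ∀ i j, ContDiff ℝ (⊤ : ℕ∞) fun p : ℝ × (Fin d → ℝ) => gf p.1 p.2 i j)
  (hgsym : ∀ ρ y, (gf ρ y).IsSymm) (hgpos : ∀ ρ y, (gf ρ y).PosDef)
  {x : Fin (d+2) → ℝ} (hx : x 0 ≠ 0)

include hgpos hx

lemma chr_0_00 : Christoffel (ambMetric gf) 0 0 0 x = 0 := by
  unfold Christoffel
  rw [amb_inv_eq gf hgpos x hx, sum_split]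
  simp only [blk_app_00, blk_app_0l, blk_app_0e, clow_00_l, clow_00_0]
  simp

lemma chr_l_00 : Christoffel (ambMetric gf) (Fin.last (d+1)) 0 0 x = 0 := by
  unfold Christoffel
  rw [amb_inv_eq gf hgpos x hx, sum_split]
  simp only [blk_app_l0, blk_app_ll, blk_app_le, clow_00_l, clow_00_0]
  simp

lemma chr_e_00 (l : Fin d) : Christoffel (ambMetric gf) (emb l) 0 0 x = 0 := by
  unfold Christoffel
  rw [amb_inv_eq gf hgpos x hx, sum_split]
  simp only [blk_app_e0, blk_app_el, blk_app_ee, clow_00_e, clow_00_l, clow_00_0]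
  simp

lemma chr_0_0l : Christoffel (ambMetric gf) 0 0 (Fin.last (d+1)) x = 0 := by
  unfold Christoffel
  rw [amb_inv_eq gf hgpos x hx, sum_split]
  simp only [blk_app_00, blk_app_0l, blk_app_0e, clow_0l_l, clow_0l_0]
  simp

lemma chr_l_0l : Christoffel (ambMetric gf) (Fin.last (d+1)) 0 (Fin.last (d+1)) x = (x 0)⁻¹ := by
  unfold Christoffel
  rw [amb_inv_eq gf hgpos x hx, sum_split]
  simp only [blk_app_l0, blk_app_ll, blk_app_le, clow_0l_l, clow_0l_0]
  simp

lemma chr_e_0l (l : Fin d) : Christoffel (ambMetric gf) (emb l) 0 (Fin.last (d+1)) x = 0 := by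
  unfold Christoffel
  rw [amb_inv_eq gf hgpos x hx, sum_split]
  simp only [blk_app_e0, blk_app_el, blk_app_ee, clow_0l_e, clow_0l_l, clow_0l_0]
  simp

lemma chr_0_0e (j : Fin d) : Christoffel (ambMetric gf) 0 0 (emb j) x = 0 := by
  unfold Christoffel
  rw [amb_inv_eq gf hgpos x hx, sum_split]
  simp only [blk_app_00, blk_app_0l, blk_app_0e, clow_0e_l, clow_0e_0]
  simp

lemma chr_l_0e (j : Fin d) : Christoffel (ambMetric gf) (Fin.last (d+1)) 0 (emb j) x = 0 := by
  unfold Christoffel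
  rw [amb_inv_eq gf hgpos x hx, sum_split]
  simp only [blk_app_l0, blk_app_ll, blk_app_le, clow_0e_l, clow_0e_0]
  simp

include hgs hgsym in
lemma chr_e_0e (l j : Fin d) :
    Christoffel (ambMetric gf) (emb l) 0 (emb j) x = if l = j then (x 0)⁻¹ else 0 := by
  unfold Christoffel
  rw [amb_inv_eq gf hgpos x hx, sum_split]
  simp only [blk_app_e0, blk_app_el, blk_app_ee, clow_0e_e gf hgs, clow_0e_l, clow_0e_0]
  have hdet : IsUnit (gf (x (Fin.last (d+1))) (mcoord x)).det :=
    isUnit_iff_ne_zero.mpr (ne_of_gt (hgpos _ _).det_pos)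
  have hmul := Matrix.nonsing_inv_mul _ hdet
  have hstep : ∀ k : Fin d,
      ((x 0)^2)⁻¹ * (gf (x (Fin.last (d+1))) (mcoord x))⁻¹ l k * (x 0 * Gfun gf j k (phiL d x))
        = (x 0)⁻¹ * ((gf (x (Fin.last (d+1))) (mcoord x))⁻¹ l k
            * gf (x (Fin.last (d+1))) (mcoord x) k j) := by
    intro k
    have h1 : Gfun gf j k (phiL d x) = gf (x (Fin.last (d+1))) (mcoord x) k j := by
      rw [show Gfun gf j k (phiL d x) = gf (x (Fin.last (d+1))) (mcoord x) j k from rfl]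
      exact gf_symm gf hgsym _ _ j k
    rw [h1]
    field_simp
  rw [Finset.sum_congr rfl (fun k _ => hstep k), ← Finset.mul_sum,
    show (∑ k, (gf (x (Fin.last (d+1))) (mcoord x))⁻¹ l k
        * gf (x (Fin.last (d+1))) (mcoord x) k j)
      = ((gf (x (Fin.last (d+1))) (mcoord x))⁻¹ * gf (x (Fin.last (d+1))) (mcoord x)) l j
      from (Matrix.mul_apply).symm, hmul, Matrix.one_apply]
  simp [mul_ite]

lemma chr_0_ll : Christoffel (ambMetric gf) 0 (Fin.last (d+1)) (Fin.last (d+1)) x = 0 := by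
  unfold Christoffel
  rw [amb_inv_eq gf hgpos x hx, sum_split]
  simp only [blk_app_00, blk_app_0l, blk_app_0e, clow_ll_l, clow_ll_0]
  simp

lemma chr_l_ll : Christoffel (ambMetric gf) (Fin.last (d+1)) (Fin.last (d+1)) (Fin.last (d+1)) x = 0 := by
  unfold Christoffel
  rw [amb_inv_eq gf hgpos x hx, sum_split]
  simp only [blk_app_l0, blk_app_ll, blk_app_le, clow_ll_l, clow_ll_0]
  simp

lemma chr_e_ll (l : Fin d) : Christoffel (ambMetric gf) (emb l) (Fin.last (d+1)) (Fin.last (d+1)) x = 0 := by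
  unfold Christoffel
  rw [amb_inv_eq gf hgpos x hx, sum_split]
  simp only [blk_app_e0, blk_app_el, blk_app_ee, clow_ll_e, clow_ll_l, clow_ll_0]
  simp

lemma chr_0_le (j : Fin d) : Christoffel (ambMetric gf) 0 (Fin.last (d+1)) (emb j) x = 0 := by
  unfold Christoffel
  rw [amb_inv_eq gf hgpos x hx, sum_split]
  simp only [blk_app_00, blk_app_0l, blk_app_0e, clow_le_l, clow_le_0]
  simp

lemma chr_l_le (j : Fin d) : Christoffel (ambMetric gf) (Fin.last (d+1)) (Fin.last (d+1)) (emb j) x = 0 := by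
  unfold Christoffel
  rw [amb_inv_eq gf hgpos x hx, sum_split]
  simp only [blk_app_l0, blk_app_ll, blk_app_le, clow_le_l, clow_le_0]
  simp

include hgs in
lemma chr_e_le (l j : Fin d) :
    Christoffel (ambMetric gf) (emb l) (Fin.last (d+1)) (emb j) x = CLE gf l j (phiL d x) := by
  unfold Christoffel
  rw [amb_inv_eq gf hgpos x hx, sum_split]
  simp only [blk_app_e0, blk_app_el, blk_app_ee, clow_le_e gf hgs, clow_le_l, clow_le_0]
  show _ = (∑ k, (gf (x (Fin.last (d+1))) (mcoord x))⁻¹ l k * GP gf j k (phiL d x)) / 2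
  rw [Finset.sum_div]
  simp only [mul_zero, zero_mul, add_zero, zero_add]
  apply Finset.sum_congr rfl
  intro k _
  field_simp

include hgs in
lemma chr_0_ee (i j : Fin d) :
    Christoffel (ambMetric gf) 0 (emb i) (emb j) x = -(x 0) * GP gf i j (phiL d x) / 2 := by
  unfold Christoffel
  rw [amb_inv_eq gf hgpos x hx, sum_split]
  simp only [blk_app_00, blk_app_0l, blk_app_0e, clow_ee_l gf hgs, clow_ee_0 gf hgs]
  field_simp
  simp

include hgs in
lemma chr_l_ee (i j : Fin d) :
    Christoffel (ambMetric gf) (Fin.last (d+1)) (emb i) (emb j) x = CEE gf i j (phiL d x) := by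
  unfold Christoffel
  rw [amb_inv_eq gf hgpos x hx, sum_split]
  simp only [blk_app_l0, blk_app_ll, blk_app_le, clow_ee_l gf hgs, clow_ee_0 gf hgs]
  show _ = -(Gfun gf i j (phiL d x)) + x (Fin.last (d+1)) * GP gf i j (phiL d x)
  field_simp
  simp

include hgs in
lemma chr_e_ee (l i j : Fin d) :
    Christoffel (ambMetric gf) (emb l) (emb i) (emb j) x = GAM gf l i j (phiL d x) := by
  unfold Christoffel
  rw [amb_inv_eq gf hgpos x hx, sum_split]
  simp only [blk_app_e0, blk_app_el, blk_app_ee, clow_ee_e gf hgs, clow_ee_l gf hgs,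
    clow_ee_0 gf hgs]
  show _ = ∑ k, (gf (x (Fin.last (d+1))) (mcoord x))⁻¹ l k
      * ((DM gf i j k (phiL d x) + DM gf j i k (phiL d x) - DM gf k i j (phiL d x)) / 2)
  simp only [mul_zero, zero_mul, add_zero, zero_add]
  apply Finset.sum_congr rfl
  intro k _
  field_simp

end AuxChr

section AuxSym
variable {d : ℕ} (gf : ℝ → (Fin d → ℝ) → Matrix (Fin d) (Fin d) ℝ)
  (hgsym : ∀ ρ y, (gf ρ y).IsSymm)

include hgsym in
lemma amb_symm (y : Fin (d+2) → ℝ) (I J : Fin (d+2)) :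
    ambMetric gf y I J = ambMetric gf y J I := by
  rcases fin_cases3 I with hI | hI | ⟨i, hI⟩ <;> subst hI <;>
    rcases fin_cases3 J with hJ | hJ | ⟨j, hJ⟩ <;> subst hJ <;>
    rw [amb_eq_blk] <;>
    simp only [blk_app_00, blk_app_0l, blk_app_l0, blk_app_ll, blk_app_0e, blk_app_e0,
      blk_app_le, blk_app_el, blk_app_ee]
  exact congrArg _ (gf_symm gf hgsym _ _ i j)

include hgsym in
lemma chr_symm (L I J : Fin (d+2)) (x : Fin (d+2) → ℝ) :
    Christoffel (ambMetric gf) L I J x = Christoffel (ambMetric gf) L J I x := by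
  unfold Christoffel
  apply Finset.sum_congr rfl
  intro k _
  congr 1
  unfold ChristoffelLow
  rw [show (fun y => ambMetric gf y I J) = (fun y => ambMetric gf y J I)
    from funext fun y => amb_symm gf hgsym y I J]
  ring

end AuxSym

section AuxEv
variable {d : ℕ}

lemma ev_ne {x : Fin (d+2) → ℝ} (hx : x 0 ≠ 0) {f g : (Fin (d+2) → ℝ) → ℝ}
    (h : ∀ y : Fin (d+2) → ℝ, y 0 ≠ 0 → f y = g y) : f =ᶠ[nhds x] g := by
  have hop : IsOpen {y : Fin (d+2) → ℝ | y 0 ≠ 0} := by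
    have heq : {y : Fin (d+2) → ℝ | y 0 ≠ 0}
        = (fun y : Fin (d+2) → ℝ => y 0) ⁻¹' ({(0:ℝ)}ᶜ) := rfl
    rw [heq]
    exact (isOpen_compl_singleton (x := (0:ℝ))).preimage (continuous_apply 0)
  exact Filter.eventuallyEq_of_mem (hop.mem_nhds hx) h

end AuxEv

section AuxTab
variable {d : ℕ} (gf : ℝ → (Fin d → ℝ) → Matrix (Fin d) (Fin d) ℝ)
  (hgs : ∀ i j, ContDiff ℝ (⊤ : ℕ∞) fun p : ℝ × (Fin d → ℝ) => gf p.1 p.2 i j)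
  (hgsym : ∀ ρ y, (gf ρ y).IsSymm) (hgpos : ∀ ρ y, (gf ρ y).PosDef)
  {x : Fin (d+2) → ℝ} (hx : x 0 ≠ 0)

include hgs hgsym hgpos hx in
lemma chr_t (m J : Fin (d+2)) :
    Christoffel (ambMetric gf) m 0 J x = if m = J ∧ J ≠ 0 then (x 0)⁻¹ else 0 := by
  rcases fin_cases3 J with hJ | hJ | ⟨j, hJ⟩ <;> subst hJ <;>
    rcases fin_cases3 m with hm | hm | ⟨l, hm⟩ <;> subst hm
  · rw [chr_0_00 gf hgpos hx]; simp
  · rw [chr_l_00 gf hgpos hx]; simp [last_ne_zero]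
  · rw [chr_e_00 gf hgpos hx]; simp [emb_ne_zero]
  · rw [chr_0_0l gf hgpos hx]; simp [zero_ne_last]
  · rw [chr_l_0l gf hgpos hx]; simp [last_ne_zero]
  · rw [chr_e_0l gf hgpos hx]; simp [emb_ne_last]
  · rw [chr_0_0e gf hgpos hx]; simp [zero_ne_emb]
  · rw [chr_l_0e gf hgpos hx]; simp [last_ne_emb]
  · rw [chr_e_0e gf hgs hgsym hgpos hx]
    simp [emb_inj, emb_ne_zero]

include hgs hgsym hgpos hx in
lemma pd_chr_t (m J K : Fin (d+2)) :
    pd K (fun y => Christoffel (ambMetric gf) m 0 J y) x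
      = if m = J ∧ J ≠ 0 then (if (0:Fin (d+2)) = K then -(((x 0)^2)⁻¹) else 0) else 0 := by
  have hev : (fun y => Christoffel (ambMetric gf) m 0 J y) =ᶠ[nhds x]
      (fun y => if m = J ∧ J ≠ 0 then (y 0)⁻¹ else 0) :=
    ev_ne hx (fun y hy => chr_t gf hgs hgsym hgpos hy m J)
  rw [pd_congr K hev]
  by_cases h : m = J ∧ J ≠ 0
  · rw [show (fun y : Fin (d+2) → ℝ => if m = J ∧ J ≠ 0 then (y 0)⁻¹ else 0)
      = fun y => (y 0)⁻¹ from funext fun y => if_pos h, if_pos h]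
    have hc : HasFDerivAt (fun y : Fin (d+2) → ℝ => y 0)
        (ContinuousLinearMap.proj (R := ℝ) (φ := fun _ : Fin (d+2) => ℝ) 0) x :=
      (ContinuousLinearMap.proj (R := ℝ) (φ := fun _ : Fin (d+2) => ℝ) 0).hasFDerivAt
    have hinv : HasFDerivAt (fun y : Fin (d+2) → ℝ => (y 0)⁻¹)
        ((ContinuousLinearMap.smulRight (1 : ℝ →L[ℝ] ℝ) (-((x 0) ^ 2)⁻¹)).comp
          (ContinuousLinearMap.proj (R := ℝ) (φ := fun _ : Fin (d+2) => ℝ) 0)) x :=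
      (hasFDerivAt_inv hx).comp x hc
    rw [pd_hasFDerivAt K hinv]
    simp [Pi.single_apply]
    split <;> simp
  · rw [show (fun y : Fin (d+2) → ℝ => if m = J ∧ J ≠ 0 then (y 0)⁻¹ else 0)
      = fun _ => (0:ℝ) from funext fun y => if_neg h, if_neg h, pd_const]

end AuxTab

section AuxPd0
variable {d : ℕ} (gf : ℝ → (Fin d → ℝ) → Matrix (Fin d) (Fin d) ℝ)
  (hgs : ∀ i j, ContDiff ℝ (⊤ : ℕ∞) fun p : ℝ × (Fin d → ℝ) => gf p.1 p.2 i j)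
  (hgsym : ∀ ρ y, (gf ρ y).IsSymm) (hgpos : ∀ ρ y, (gf ρ y).PosDef)
  {x : Fin (d+2) → ℝ} (hx : x 0 ≠ 0)

include hgs hgsym hgpos hx in
lemma pd0_chr (m K J : Fin (d+2)) :
    pd 0 (fun y => Christoffel (ambMetric gf) m K J y) x
      = (if m = J ∧ J ≠ 0 ∧ K = 0 then -(((x 0)^2)⁻¹) else 0)
        + (if m = K ∧ K ≠ 0 ∧ J = 0 then -(((x 0)^2)⁻¹) else 0)
        + (if m = 0 ∧ K ≠ 0 ∧ J ≠ 0 then Christoffel (ambMetric gf) m K J x * (x 0)⁻¹ else 0) := by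
  by_cases hK : K = 0
  · subst hK
    rw [pd_chr_t gf hgs hgsym hgpos hx m J 0]
    by_cases h : m = J ∧ J ≠ 0
    · simp [h]
    · simp [h]
  · by_cases hJ : J = 0
    · subst hJ
      rw [show (fun y => Christoffel (ambMetric gf) m K 0 y)
          = (fun y => Christoffel (ambMetric gf) m 0 K y)
        from funext fun y => chr_symm gf hgsym m K 0 y]
      rw [pd_chr_t gf hgs hgsym hgpos hx m K 0]
      by_cases h : m = K ∧ K ≠ 0
      · simp [h, hK]
      · simp [h, hK]
    · rcases fin_cases3 m with hm | hm | ⟨l, hm⟩ <;> subst hm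
      · -- m = 0
        rcases fin_cases3 K with h1 | h1 | ⟨k, h1⟩ <;> subst h1
        · exact absurd rfl hK
        · rcases fin_cases3 J with h2 | h2 | ⟨j, h2⟩ <;> subst h2
          · exact absurd rfl hJ
          · rw [pd_congr 0 (ev_ne hx (fun y hy => chr_0_ll gf hgpos hy)), pd_const,
              chr_0_ll gf hgpos hx]
            simp [hK, hJ]
          · rw [pd_congr 0 (ev_ne hx (fun y hy => chr_0_le gf hgpos hy j)), pd_const,
              chr_0_le gf hgpos hx j]
            simp [hK, hJ]
        · rcases fin_cases3 J with h2 | h2 | ⟨j, h2⟩ <;> subst h2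
          · exact absurd rfl hJ
          · rw [pd_congr 0 (ev_ne hx (fun y hy => by
                rw [chr_symm gf hgsym, chr_0_le gf hgpos hy k] )), pd_const,
              chr_symm gf hgsym, chr_0_le gf hgpos hx k]
            simp [hK, hJ]
          · have hev : (fun y => Christoffel (ambMetric gf) 0 (emb k) (emb j) y) =ᶠ[nhds x]
                (fun y => y 0 * ((-1/2 : ℝ) * GP gf k j (phiL d y))) :=
              ev_ne hx (fun y hy => by rw [chr_0_ee gf hgs hgpos hy k j]; ring)
            have hgp : DifferentiableAt ℝ
                (fun y : Fin (d+2) → ℝ => (-1/2 : ℝ) * GP gf k j (phiL d y)) x :=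
              DifferentiableAt.const_mul
                (DifferentiableAt.comp x (gp_diff gf hgs k j (phiL d x))
                  (phiL d).differentiableAt) (-1/2)
            rw [pd_congr 0 hev, pd_mul 0 (diff_coord 0 x) hgp, pd_coord,
              pd_zero_comp_phiL x (fun p => (-1/2 : ℝ) * GP gf k j p),
              chr_0_ee gf hgs hgpos hx k j]
            simp [hK, hJ, zero_ne_emb]
            field_simp
      · -- m = last
        rcases fin_cases3 K with h1 | h1 | ⟨k, h1⟩ <;> subst h1
        · exact absurd rfl hK
        · rcases fin_cases3 J with h2 | h2 | ⟨j, h2⟩ <;> subst h2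
          · exact absurd rfl hJ
          · rw [pd_congr 0 (ev_ne hx (fun y hy => chr_l_ll gf hgpos hy)), pd_const]
            simp [hK, hJ, last_ne_zero]
          · rw [pd_congr 0 (ev_ne hx (fun y hy => chr_l_le gf hgpos hy j)), pd_const]
            simp [hK, hJ, last_ne_zero]
        · rcases fin_cases3 J with h2 | h2 | ⟨j, h2⟩ <;> subst h2
          · exact absurd rfl hJ
          · rw [pd_congr 0 (ev_ne hx (fun y hy => by
                rw [chr_symm gf hgsym, chr_l_le gf hgpos hy k] )), pd_const]
            simp [hK, hJ, last_ne_zero]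
          · rw [pd_congr 0 (ev_ne hx (fun y hy => chr_l_ee gf hgs hgpos hy k j)),
              pd_zero_comp_phiL x (CEE gf k j)]
            simp [hK, hJ, last_ne_zero]
      · -- m = emb l
        rcases fin_cases3 K with h1 | h1 | ⟨k, h1⟩ <;> subst h1
        · exact absurd rfl hK
        · rcases fin_cases3 J with h2 | h2 | ⟨j, h2⟩ <;> subst h2
          · exact absurd rfl hJ
          · rw [pd_congr 0 (ev_ne hx (fun y hy => chr_e_ll gf hgpos hy l)), pd_const]
            simp [hK, hJ, emb_ne_zero]
          · rw [pd_congr 0 (ev_ne hx (fun y hy => chr_e_le gf hgs hgpos hy l j)),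
              pd_zero_comp_phiL x (CLE gf l j)]
            simp [hK, hJ, emb_ne_zero]
        · rcases fin_cases3 J with h2 | h2 | ⟨j, h2⟩ <;> subst h2
          · exact absurd rfl hJ
          · rw [pd_congr 0 (ev_ne hx (fun y hy => by
                rw [chr_symm gf hgsym, chr_e_le gf hgs hgpos hy l k] )),
              pd_zero_comp_phiL x (CLE gf l k)]
            simp [hK, hJ, emb_ne_zero]
          · rw [pd_congr 0 (ev_ne hx (fun y hy => chr_e_ee gf hgs hgpos hy l k j)),
              pd_zero_comp_phiL x (GAM gf l k j)]
            simp [hK, hJ, emb_ne_zero]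

end AuxPd0


section AuxR1
variable {d : ℕ} (gf : ℝ → (Fin d → ℝ) → Matrix (Fin d) (Fin d) ℝ)
  (hgs : ∀ i j, ContDiff ℝ (⊤ : ℕ∞) fun p : ℝ × (Fin d → ℝ) => gf p.1 p.2 i j)
  (hgsym : ∀ ρ y, (gf ρ y).IsSymm) (hgpos : ∀ ρ y, (gf ρ y).PosDef)
  {x : Fin (d+2) → ℝ} (hx : x 0 ≠ 0)

include hgs hgsym hgpos hx in
lemma sum_term3 (m K J : Fin (d+2)) :
    ∑ p, Christoffel (ambMetric gf) m K p x * Christoffel (ambMetric gf) p 0 J x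
      = if J ≠ 0 then Christoffel (ambMetric gf) m K J x * (x 0)⁻¹ else 0 := by
  by_cases hJ : J = 0
  · subst hJ
    rw [if_neg (by simp)]
    apply Finset.sum_eq_zero
    intro p _
    rw [chr_t gf hgs hgsym hgpos hx p 0, if_neg (by simp), mul_zero]
  · rw [if_pos hJ]
    have hstep : ∀ p : Fin (d+2),
        Christoffel (ambMetric gf) m K p x * Christoffel (ambMetric gf) p 0 J x
          = if p = J then Christoffel (ambMetric gf) m K p x * (x 0)⁻¹ else 0 := by
      intro p
      rw [chr_t gf hgs hgsym hgpos hx p J]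
      by_cases hp : p = J
      · rw [if_pos ⟨hp, hJ⟩, if_pos hp]
      · rw [if_neg (fun hc => hp hc.1), if_neg hp, mul_zero]
    rw [Finset.sum_congr rfl (fun p _ => hstep p), Finset.sum_ite_eq' Finset.univ J
      (fun p => Christoffel (ambMetric gf) m K p x * (x 0)⁻¹)]
    simp

include hgs hgsym hgpos hx in
lemma sum_term4 (m K J : Fin (d+2)) :
    ∑ p, Christoffel (ambMetric gf) m 0 p x * Christoffel (ambMetric gf) p K J x
      = if m ≠ 0 then (x 0)⁻¹ * Christoffel (ambMetric gf) m K J x else 0 := by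
  by_cases hm : m = 0
  · subst hm
    rw [if_neg (by simp)]
    apply Finset.sum_eq_zero
    intro p _
    rw [chr_t gf hgs hgsym hgpos hx 0 p]
    by_cases hp : (0 : Fin (d+2)) = p ∧ p ≠ 0
    · exact absurd hp.1.symm hp.2
    · rw [if_neg hp, zero_mul]
  · rw [if_pos hm]
    have hstep : ∀ p : Fin (d+2),
        Christoffel (ambMetric gf) m 0 p x * Christoffel (ambMetric gf) p K J x
          = if p = m then (x 0)⁻¹ * Christoffel (ambMetric gf) p K J x else 0 := by
      intro p
      rw [chr_t gf hgs hgsym hgpos hx m p]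
      by_cases hp : p = m
      · subst hp
        rw [if_pos ⟨rfl, hm⟩, if_pos rfl]
      · rw [if_neg (fun hc => hp (hc.1.symm)), if_neg hp, zero_mul]
    rw [Finset.sum_congr rfl (fun p _ => hstep p), Finset.sum_ite_eq' Finset.univ m
      (fun p => (x 0)⁻¹ * Christoffel (ambMetric gf) p K J x)]
    simp

include hgs hgsym hgpos hx in
lemma riemannUp_zero (m J K : Fin (d+2)) :
    RiemannUp (ambMetric gf) m J K 0 x = 0 := by
  unfold RiemannUp
  rw [pd_chr_t gf hgs hgsym hgpos hx m J K, pd0_chr gf hgs hgsym hgpos hx m K J,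
    sum_term3 gf hgs hgsym hgpos hx m K J, sum_term4 gf hgs hgsym hgpos hx m K J]
  by_cases hJ : J = 0
  · subst hJ
    have hchr : Christoffel (ambMetric gf) m K 0 x
        = if m = K ∧ K ≠ 0 then (x 0)⁻¹ else 0 := by
      rw [chr_symm gf hgsym, chr_t gf hgs hgsym hgpos hx m K]
    rw [hchr]
    by_cases hK : K = 0
    · subst hK
      simp
    · by_cases hm : m = 0
      · subst hm
        have h1 : ¬((0:Fin (d+2)) = K ∧ K ≠ 0) := fun hc => hK hc.1.symm
        simp [hK, h1]
        exact fun h0K => absurd h0K.symm hK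
      · by_cases hmK : m = K
        · subst hmK
          simp only [ne_eq, not_true_eq_false, and_false, if_false, if_pos (And.intro rfl hK),
            if_pos (And.intro rfl (And.intro hK rfl)), if_pos hm, and_true, false_and,
            if_neg hm]
          have h2 : ¬(m = 0 ∧ ¬m = 0) := fun hc => hc.2 hc.1
          simp [hK, hm, h2]
          field_simp
          ring
        · have h2 : ¬(m = K ∧ ¬K = 0) := fun hc => hmK hc.1
          have h3 : ¬(m = K ∧ ¬K = 0 ∧ (0:Fin (d+2)) = 0) := fun hc => hmK hc.1
          simp [hK, hm, hmK, h2, h3]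
  · by_cases hK : K = 0
    · subst hK
      have hchr : Christoffel (ambMetric gf) m 0 J x
          = if m = J ∧ J ≠ 0 then (x 0)⁻¹ else 0 := chr_t gf hgs hgsym hgpos hx m J
      rw [hchr]
      by_cases hmJ : m = J
      · subst hmJ
        have hm0 : ¬ m = 0 := fun h => hJ h
        simp [hJ, hm0]
      · simp [hJ, hmJ, fun hc : m = J ∧ ¬J = 0 => hmJ hc.1,
          fun hc : m = J ∧ ¬J = 0 ∧ (0:Fin (d+2)) = 0 => hmJ hc.1]
    · by_cases hm : m = 0
      · subst hm
        have h4 : ¬((0:Fin (d+2)) = K ∧ ¬K = 0 ∧ J = 0) := fun hc => hJ hc.2.2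
        simp [hJ, hK, h4, fun hc : (0:Fin (d+2)) = J ∧ ¬J = 0 ∧ K = 0 => hK hc.2.2]
        exact fun h1 _ => absurd h1.symm hJ
      · simp [hJ, hK, hm, Ne.symm hK]
        ring

end AuxR1

section AuxR2
variable {d : ℕ} (gf : ℝ → (Fin d → ℝ) → Matrix (Fin d) (Fin d) ℝ)
  (hgs : ∀ i j, ContDiff ℝ (⊤ : ℕ∞) fun p : ℝ × (Fin d → ℝ) => gf p.1 p.2 i j)
  (hgsym : ∀ ρ y, (gf ρ y).IsSymm) (hgpos : ∀ ρ y, (gf ρ y).PosDef)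
  {x : Fin (d+2) → ℝ} (hx : x 0 ≠ 0)

include hgs hgpos hx in
lemma pd_el_chr0ee (j k : Fin d) :
    pd (Fin.last (d+1)) (fun y => Christoffel (ambMetric gf) 0 (emb k) (emb j) y) x
      = -(x 0) * GPP gf k j (phiL d x) / 2 := by
  have hev : (fun y => Christoffel (ambMetric gf) 0 (emb k) (emb j) y) =ᶠ[nhds x]
      (fun y => y 0 * ((-1/2 : ℝ) * GP gf k j (phiL d y))) :=
    ev_ne hx (fun y hy => by rw [chr_0_ee gf hgs hgpos hy k j]; ring)
  have hgp : DifferentiableAt ℝ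
      (fun y : Fin (d+2) → ℝ => (-1/2 : ℝ) * GP gf k j (phiL d y)) x :=
    DifferentiableAt.const_mul
      (DifferentiableAt.comp x (gp_diff gf hgs k j (phiL d x))
        (phiL d).differentiableAt) (-1/2)
  rw [pd_congr _ hev, pd_mul _ (diff_coord 0 x) hgp, pd_coord,
    pd_comp_phiL (fun p => (-1/2 : ℝ) * GP gf k j p)
      (DifferentiableAt.const_mul (gp_diff gf hgs k j (phiL d x)) (-1/2)) (Fin.last (d+1)),
    phiL_single_last]
  rw [fderiv_const_mul (gp_diff gf hgs k j (phiL d x)) (-1/2)]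
  simp [zero_ne_last, GPP]
  ring

include hgs hgsym hgpos hx in
lemma sum3' (j k : Fin d) :
    ∑ p, Christoffel (ambMetric gf) 0 (emb k) p x
        * Christoffel (ambMetric gf) p (Fin.last (d+1)) (emb j) x
      = -(x 0)/4 * ∑ q, ∑ r, GP gf k q (phiL d x)
          * (gf (x (Fin.last (d+1))) (mcoord x))⁻¹ q r * GP gf j r (phiL d x) := by
  rw [sum_split]
  rw [chr_0_le gf hgpos hx j, mul_zero, chr_l_le gf hgpos hx j, mul_zero, add_zero]
  have hstep : ∀ q : Fin d,
      Christoffel (ambMetric gf) 0 (emb k) (emb q) x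
          * Christoffel (ambMetric gf) (emb q) (Fin.last (d+1)) (emb j) x
        = (-(x 0)/4) * ∑ r, GP gf k q (phiL d x)
            * (gf (x (Fin.last (d+1))) (mcoord x))⁻¹ q r * GP gf j r (phiL d x) := by
    intro q
    rw [chr_0_ee gf hgs hgpos hx k q, chr_e_le gf hgs hgpos hx q j]
    show -(x 0) * GP gf k q (phiL d x) / 2
        * ((∑ r, (gf (x (Fin.last (d+1))) (mcoord x))⁻¹ q r * GP gf j r (phiL d x)) / 2) = _
    rw [Finset.sum_div, Finset.mul_sum, Finset.mul_sum]
    apply Finset.sum_congr rfl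
    intro r _
    ring
  rw [Finset.sum_congr rfl (fun q _ => hstep q), ← Finset.mul_sum]
  ring

include hgs hgsym hgpos hx in
lemma sum4' (j k : Fin d) :
    ∑ p, Christoffel (ambMetric gf) 0 (Fin.last (d+1)) p x
        * Christoffel (ambMetric gf) p (emb k) (emb j) x = 0 := by
  rw [sum_split]
  have h0 : Christoffel (ambMetric gf) 0 (Fin.last (d+1)) 0 x = 0 := by
    rw [chr_symm gf hgsym, chr_t gf hgs hgsym hgpos hx 0 (Fin.last (d+1)),
      if_neg (fun hc => zero_ne_last hc.1)]
  rw [h0, zero_mul, chr_0_ll gf hgpos hx, zero_mul]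
  rw [Finset.sum_eq_zero (fun q _ => by rw [chr_0_le gf hgpos hx q, zero_mul])]
  ring

include hgs hgsym hgpos hx in
lemma part2 (j k : Fin d) :
    RiemannLow (ambMetric gf) (Fin.last (d+1)) (emb j) (emb k) (Fin.last (d+1)) x
      = (x 0)^2 * GPP gf k j (phiL d x) / 2
        - (x 0)^2 / 4 * ∑ q, ∑ r, GP gf k q (phiL d x)
            * (gf (x (Fin.last (d+1))) (mcoord x))⁻¹ q r * GP gf j r (phiL d x) := by
  unfold RiemannLow
  rw [sum_split]
  have hA0 : ambMetric gf x (Fin.last (d+1)) 0 = x 0 := by rw [amb_eq_blk, blk_app_l0]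
  have hAl : ambMetric gf x (Fin.last (d+1)) (Fin.last (d+1)) = 0 := by
    rw [amb_eq_blk, blk_app_ll]
  rw [hA0, hAl, zero_mul, add_zero,
    Finset.sum_eq_zero (fun i _ => by
      rw [show ambMetric gf x (Fin.last (d+1)) (emb i) = 0 from by rw [amb_eq_blk, blk_app_le],
        zero_mul]),
    add_zero]
  have hRup : RiemannUp (ambMetric gf) 0 (emb j) (emb k) (Fin.last (d+1)) x
      = x 0 * GPP gf k j (phiL d x) / 2
        - (x 0)/4 * ∑ q, ∑ r, GP gf k q (phiL d x)
            * (gf (x (Fin.last (d+1))) (mcoord x))⁻¹ q r * GP gf j r (phiL d x) := by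
    unfold RiemannUp
    rw [pd_congr _ (ev_ne hx (g := fun _ => (0:ℝ)) (fun y hy => chr_0_le gf hgpos hy j)),
      pd_const, pd_el_chr0ee gf hgs hgpos hx j k,
      sum3' gf hgs hgsym hgpos hx j k, sum4' gf hgs hgsym hgpos hx j k]
    ring
  rw [hRup]
  ring

end AuxR2

section AuxSym2
variable {d : ℕ} (gf : ℝ → (Fin d → ℝ) → Matrix (Fin d) (Fin d) ℝ)
  (hgsym : ∀ ρ y, (gf ρ y).IsSymm)

include hgsym in
lemma gp_symm (i j : Fin d) : GP gf i j = GP gf j i := by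
  unfold GP; rw [gfun_symm gf hgsym i j]

include hgsym in
lemma gpp_symm (i j : Fin d) : GPP gf i j = GPP gf j i := by
  unfold GPP; rw [gp_symm gf hgsym i j]

end AuxSym2


/-- For `g̃ = 2ρ dt² + 2t dρ dt + t² g_ρ`, the curvature components with an
index in the `t`-direction vanish: `R̃_{IJK0} = 0`; moreover
`R̃_{∞jk∞} = (t²/2)[(g_ρ'')_{jk} - ½ (g_ρ)^{pq}(g_ρ')_{jp}(g_ρ')_{kq}]`. -/
theorem ambient_curvature_components {d : ℕ}
    (gf : ℝ → (Fin d → ℝ) → Matrix (Fin d) (Fin d) ℝ)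
    (hgs : ∀ i j, ContDiff ℝ (⊤ : ℕ∞) fun p : ℝ × (Fin d → ℝ) => gf p.1 p.2 i j)
    (hgsym : ∀ ρ y, (gf ρ y).IsSymm) (hgpos : ∀ ρ y, (gf ρ y).PosDef) :
    ∀ x : Fin (d + 2) → ℝ, 0 < x 0 →
      (∀ I J K : Fin (d + 2), RiemannLow (ambMetric gf) I J K 0 x = 0)
      ∧ (∀ j k : Fin d,
          RiemannLow (ambMetric gf) (Fin.last (d + 1)) (emb j) (emb k) (Fin.last (d + 1)) x
            = (x 0) ^ 2 / 2 *
                (deriv (fun r => deriv (fun s => gf s (mcoord x) j k) r) (x (Fin.last (d + 1)))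
                  - (1 / 2) * ∑ p, ∑ q, (gf (x (Fin.last (d + 1))) (mcoord x))⁻¹ p q
                      * deriv (fun r => gf r (mcoord x) j p) (x (Fin.last (d + 1)))
                      * deriv (fun r => gf r (mcoord x) k q) (x (Fin.last (d + 1))))) := by
  intro x hx0
  have hx : x 0 ≠ 0 := ne_of_gt hx0
  refine ⟨fun I J K => ?_, fun j k => ?_⟩
  · unfold RiemannLow
    exact Finset.sum_eq_zero fun m _ => by
      rw [riemannUp_zero gf hgs hgsym hgpos hx m J K, mul_zero]
  · rw [part2 gf hgs hgsym hgpos hx j k]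
    have hd1 : ∀ a b : Fin d,
        deriv (fun r => gf r (mcoord x) a b) (x (Fin.last (d + 1)))
          = GP gf a b (phiL d x) :=
      fun a b => (gp_eq_deriv gf hgs a b (x (Fin.last (d+1))) (mcoord x)).symm
    have hd2 : deriv (fun r => deriv (fun s => gf s (mcoord x) j k) r) (x (Fin.last (d + 1)))
        = GPP gf j k (phiL d x) :=
      (gpp_eq_deriv gf hgs j k (x (Fin.last (d+1))) (mcoord x)).symm
    rw [hd2]
    simp only [hd1]
    rw [gpp_symm gf hgsym k j]
    have hsum : (∑ q, ∑ r, GP gf k q (phiL d x)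
          * (gf (x (Fin.last (d+1))) (mcoord x))⁻¹ q r * GP gf j r (phiL d x))
        = ∑ p, ∑ q, (gf (x (Fin.last (d+1))) (mcoord x))⁻¹ p q
            * GP gf j p (phiL d x) * GP gf k q (phiL d x) := by
      rw [Finset.sum_comm]
      refine Finset.sum_congr rfl fun p _ => Finset.sum_congr rfl fun q _ => ?_
      rw [ginv_symm gf hgsym]
      ring
    rw [hsum]
    ring
end
end

section
/- Let P be a symmetric 2-tensor on (M,g) with ∇_iP_{jk} = ∇_jP_{ik}, U = Id + ρP invertible, g_ρ = g(U·,U·). Then ∂_ρ(g_ρ)_{ij} = 2 P_{ik} U^k_j, and the Levi-Civita connection of g_ρ applied to g_ρ' satisfies ∇^{g_ρ}_k (g_ρ')_{ij} = 2 ∇_k P_{ij}; in particular, since ∇P is totally symmetric, ∇^{g_ρ}_k (g_ρ')_{ij} = ∇^{g_ρ}_j (g_ρ')_{ik}. -/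
open Matrix BigOperators

noncomputable section

namespace CFD
open Matrix BigOperators

variable {d : ℕ}

theorem pd_congr {i : Fin d} {x : Fin d → ℝ} {f h : (Fin d → ℝ) → ℝ}
    (e : ∀ y, f y = h y) : pd i f x = pd i h x := by
  have : f = h := funext e; rw [this]

theorem pd_add {i : Fin d} {x : Fin d → ℝ} {f h : (Fin d → ℝ) → ℝ}
    (hf : DifferentiableAt ℝ f x) (hh : DifferentiableAt ℝ h x) :
    pd i (fun y => f y + h y) x = pd i f x + pd i h x := by
  unfold pd; rw [fderiv_fun_add hf hh]; rfl

theorem pd_mul {i : Fin d} {x : Fin d → ℝ} {f h : (Fin d → ℝ) → ℝ}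
    (hf : DifferentiableAt ℝ f x) (hh : DifferentiableAt ℝ h x) :
    pd i (fun y => f y * h y) x = f x * pd i h x + h x * pd i f x := by
  unfold pd; rw [fderiv_fun_mul hf hh]; rfl

theorem pd_const (i : Fin d) (x : Fin d → ℝ) (c : ℝ) : pd i (fun _ => c) x = 0 := by
  unfold pd; rw [fderiv_fun_const]; rfl

theorem pd_const_mul {i : Fin d} {x : Fin d → ℝ} {f : (Fin d → ℝ) → ℝ} (c : ℝ)
    (hf : DifferentiableAt ℝ f x) :
    pd i (fun y => c * f y) x = c * pd i f x := by
  unfold pd; rw [fderiv_const_mul hf]; rfl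

theorem pd_sum {i : Fin d} {x : Fin d → ℝ} {ι : Type*} (s : Finset ι)
    (f : ι → (Fin d → ℝ) → ℝ) (hf : ∀ k ∈ s, DifferentiableAt ℝ (f k) x) :
    pd i (fun y => ∑ k ∈ s, f k y) x = ∑ k ∈ s, pd i (f k) x := by
  unfold pd; rw [fderiv_fun_sum hf]; simp

theorem diffAt_det {n m : ℕ} (M : (Fin n → ℝ) → Matrix (Fin m) (Fin m) ℝ)
    (hM : ∀ i j x, DifferentiableAt ℝ (fun y => M y i j) x) (x : Fin n → ℝ) :
    DifferentiableAt ℝ (fun y => (M y).det) x := by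
  have e : (fun y => (M y).det)
      = fun y => ∑ σ : Equiv.Perm (Fin m), ((Equiv.Perm.sign σ : ℤ) : ℝ) * ∏ i, M y (σ i) i := by
    funext y; rw [Matrix.det_apply]
    refine Finset.sum_congr rfl fun σ _ => ?_
    simp [Units.smul_def, zsmul_eq_mul]
  rw [e]
  apply DifferentiableAt.fun_sum
  intro σ _
  apply DifferentiableAt.const_mul
  exact HasFDerivAt.differentiableAt
    (HasFDerivAt.finset_prod (fun i _ => (hM (σ i) i x).hasFDerivAt))

theorem diffAt_inv (g : MetricField d)
    (hg : ∀ i j x, DifferentiableAt ℝ (fun y => g y i j) x)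
    (hdet : ∀ x, (g x).det ≠ 0) (i j : Fin d) (x : Fin d → ℝ) :
    DifferentiableAt ℝ (fun y => (g y)⁻¹ i j) x := by
  have e : (fun y => (g y)⁻¹ i j)
      = fun y => ((g y).det)⁻¹ * ((g y).updateRow j (Pi.single i 1)).det := by
    funext y
    rw [Matrix.inv_def, Matrix.smul_apply, Matrix.adjugate_apply, Ring.inverse_eq_inv',
      smul_eq_mul]
  rw [e]
  refine DifferentiableAt.mul (DifferentiableAt.inv (diffAt_det g hg x) (hdet x)) ?_
  refine diffAt_det (fun y => (g y).updateRow j (Pi.single i 1)) (fun a b x' => ?_) x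
  by_cases haj : a = j
  · subst haj
    simp only [Matrix.updateRow_self]
    exact differentiableAt_const _
  · simp only [Matrix.updateRow_ne haj]
    exact hg a b x'

theorem diff_entry_mul {M N : MetricField d}
    (hM : ∀ i j x, DifferentiableAt ℝ (fun y => M y i j) x)
    (hN : ∀ i j x, DifferentiableAt ℝ (fun y => N y i j) x)
    (i j : Fin d) (x : Fin d → ℝ) :
    DifferentiableAt ℝ (fun y => (M y * N y) i j) x := by
  have e : (fun y => (M y * N y) i j) = fun y => ∑ c, M y i c * N y c j := by
    funext y; rw [Matrix.mul_apply]
  rw [e]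
  exact DifferentiableAt.fun_sum fun c _ => (hM i c x).fun_mul (hN c j x)

/-- the matrix of partial derivatives of the entries of a matrix field -/
def dmat (F : MetricField d) (k : Fin d) (x : Fin d → ℝ) : Matrix (Fin d) (Fin d) ℝ :=
  Matrix.of fun a b => pd k (fun y => F y a b) x

theorem pd_entry_mul {M N : MetricField d}
    (hM : ∀ i j x, DifferentiableAt ℝ (fun y => M y i j) x)
    (hN : ∀ i j x, DifferentiableAt ℝ (fun y => N y i j) x)
    (k i j : Fin d) (x : Fin d → ℝ) :
    pd k (fun y => (M y * N y) i j) x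
      = (dmat M k x * N x + M x * dmat N k x) i j := by
  have e : (fun y => (M y * N y) i j) = fun y => ∑ c, M y i c * N y c j := by
    funext y; rw [Matrix.mul_apply]
  rw [e, pd_sum _ _ (fun c _ => (hM i c x).fun_mul (hN c j x))]
  rw [Matrix.add_apply, Matrix.mul_apply, Matrix.mul_apply, ← Finset.sum_add_distrib]
  refine Finset.sum_congr rfl fun c _ => ?_
  rw [pd_mul (hM i c x) (hN c j x)]
  simp only [Matrix.of_apply, dmat]; ring

theorem dmat_mul {M N : MetricField d}
    (hM : ∀ i j x, DifferentiableAt ℝ (fun y => M y i j) x)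
    (hN : ∀ i j x, DifferentiableAt ℝ (fun y => N y i j) x)
    (k : Fin d) (x : Fin d → ℝ) :
    dmat (fun y => M y * N y) k x = dmat M k x * N x + M x * dmat N k x := by
  ext i j; exact pd_entry_mul hM hN k i j x

theorem dmat_inv (g : MetricField d)
    (hg : ∀ i j x, DifferentiableAt ℝ (fun y => g y i j) x)
    (hdet : ∀ x, IsUnit (g x).det) (k : Fin d) (x : Fin d → ℝ) :
    dmat (fun y => (g y)⁻¹) k x = -((g x)⁻¹ * dmat g k x * (g x)⁻¹) := by
  have hb : ∀ i j x, DifferentiableAt ℝ (fun y => (g y)⁻¹ i j) x :=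
    fun i j x => diffAt_inv g hg (fun x' => (hdet x').ne_zero ∘ (by simp [·])) i j x
  have key : dmat (fun y => (g y)⁻¹) k x * g x + (g x)⁻¹ * dmat g k x = 0 := by
    have e1 : ∀ i j, pd k (fun y => ((g y)⁻¹ * g y) i j) x
        = (dmat (fun y => (g y)⁻¹) k x * g x + (g x)⁻¹ * dmat g k x) i j :=
      fun i j => pd_entry_mul hb hg k i j x
    ext i j
    rw [Matrix.zero_apply, ← e1 i j]
    have e3 : ∀ y, ((g y)⁻¹ * g y) i j = (1 : Matrix (Fin d) (Fin d) ℝ) i j := by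
      intro y; rw [Matrix.nonsing_inv_mul _ (hdet y)]
    rw [pd_congr e3, pd_const]
  have h2 : dmat (fun y => (g y)⁻¹) k x * g x = -((g x)⁻¹ * dmat g k x) := by
    rw [← sub_eq_zero, sub_neg_eq_add]; exact key
  calc dmat (fun y => (g y)⁻¹) k x
      = dmat (fun y => (g y)⁻¹) k x * (g x * (g x)⁻¹) := by
        rw [Matrix.mul_nonsing_inv _ (hdet x), Matrix.mul_one]
    _ = dmat (fun y => (g y)⁻¹) k x * g x * (g x)⁻¹ := by rw [Matrix.mul_assoc]
    _ = -((g x)⁻¹ * dmat g k x) * (g x)⁻¹ := by rw [h2]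
    _ = -((g x)⁻¹ * dmat g k x * (g x)⁻¹) := by rw [Matrix.neg_mul]

/-- expansion of the deformed metric -/
theorem grho_expand (a p : Matrix (Fin d) (Fin d) ℝ) (ha : IsUnit a.det) (r : ℝ) :
    a * (1 + r • (a⁻¹ * p)) * (1 + r • (a⁻¹ * p))
      = a + (2 * r) • p + (r ^ 2) • (p * a⁻¹ * p) := by
  have hab : a * (a⁻¹ * p) = p := by
    rw [← Matrix.mul_assoc, Matrix.mul_nonsing_inv _ ha, Matrix.one_mul]
  have h1 : a * (1 + r • (a⁻¹ * p)) = a + r • p := by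
    rw [Matrix.mul_add, Matrix.mul_one, Matrix.mul_smul, hab]
  rw [h1]
  simp only [Matrix.add_mul, Matrix.mul_add, Matrix.mul_one, Matrix.mul_smul, Matrix.smul_mul,
    hab, smul_smul]
  rw [← Matrix.mul_assoc p a⁻¹ p]
  module

/-- Part 1: the ρ-derivative of the family entries -/
theorem deriv_grho (a p : Matrix (Fin d) (Fin d) ℝ) (ha : IsUnit a.det) (ρ : ℝ) (i j : Fin d) :
    deriv (fun r => (a * (1 + r • (a⁻¹ * p)) * (1 + r • (a⁻¹ * p))) i j) ρ
      = 2 * p i j + 2 * ρ * (p * a⁻¹ * p) i j := by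
  have e : (fun r => (a * (1 + r • (a⁻¹ * p)) * (1 + r • (a⁻¹ * p))) i j)
      = fun r => a i j + 2 * r * p i j + r ^ 2 * (p * a⁻¹ * p) i j := by
    funext r
    rw [grho_expand a p ha r]
    simp [Matrix.add_apply, Matrix.smul_apply, smul_eq_mul]
  rw [e]
  have h : HasDerivAt (fun r : ℝ => a i j + 2 * r * p i j + r ^ 2 * (p * a⁻¹ * p) i j)
      (2 * p i j + 2 * ρ * (p * a⁻¹ * p) i j) ρ := by
    have h1 : HasDerivAt (fun r : ℝ => 2 * r * p i j) (2 * p i j) ρ := by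
      simpa [mul_comm, mul_assoc] using
        ((hasDerivAt_id ρ).const_mul 2).mul_const (p i j)
    have h2 : HasDerivAt (fun r : ℝ => r ^ 2 * (p * a⁻¹ * p) i j)
        (2 * ρ * (p * a⁻¹ * p) i j) ρ := by
      simpa [mul_comm, mul_assoc] using (hasDerivAt_pow 2 ρ).mul_const ((p * a⁻¹ * p) i j)
    simpa using ((hasDerivAt_const ρ (a i j)).fun_add h1).fun_add h2
  exact h.deriv


end CFD
namespace CFD2
open Matrix BigOperators CFD

variable {d : ℕ}

/-- Christoffel symbols (second kind) as a matrix: `(Gam g k x) l m = Γ^l_{km}`. -/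
def Gam (g : MetricField d) (k : Fin d) (x : Fin d → ℝ) : Matrix (Fin d) (Fin d) ℝ :=
  Matrix.of fun l m => Christoffel g l k m x

/-- Christoffel symbols (first kind) as a matrix: `(GamL g k x) i m = Γ_{kim}`. -/
def GamL (g : MetricField d) (k : Fin d) (x : Fin d → ℝ) : Matrix (Fin d) (Fin d) ℝ :=
  Matrix.of fun i m => ChristoffelLow g k i m x

theorem gam_eq (g : MetricField d) (k : Fin d) (x : Fin d → ℝ) :
    Gam g k x = (g x)⁻¹ * (GamL g k x)ᵀ := by
  ext l m
  rw [Matrix.mul_apply]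
  simp only [Gam, GamL, Matrix.of_apply, Christoffel, Matrix.transpose_apply, Matrix.of_apply]

theorem covd2_matrix (g F : MetricField d) (k i j : Fin d) (x : Fin d → ℝ) :
    CovD2 g F k i j x = (dmat F k x - (Gam g k x)ᵀ * F x - F x * Gam g k x) i j := by
  simp only [CovD2, Matrix.sub_apply, Matrix.mul_apply, Matrix.transpose_apply,
    Gam, dmat, Matrix.of_apply]
  congr 1
  exact Finset.sum_congr rfl fun l _ => mul_comm _ _

section WithHyp
variable {g P : MetricField d}

theorem hga (hgs : ∀ i j, ContDiff ℝ (⊤ : ℕ∞) fun x => g x i j) :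
    ∀ i j x, DifferentiableAt ℝ (fun y => g y i j) x :=
  fun i j x => ((hgs i j).differentiable (by simp)).differentiableAt

theorem hdetu (hgpos : ∀ x, (g x).PosDef) : ∀ x, IsUnit (g x).det :=
  fun x => isUnit_iff_ne_zero.mpr (hgpos x).det_pos.ne'

theorem hbd (hgs : ∀ i j, ContDiff ℝ (⊤ : ℕ∞) fun x => g x i j) (hgpos : ∀ x, (g x).PosDef) :
    ∀ i j x, DifferentiableAt ℝ (fun y => (g y)⁻¹ i j) x :=
  fun i j x => diffAt_inv g (hga hgs) (fun x' => (hgpos x').det_pos.ne') i j x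

theorem hbsym (hgsym : ∀ x, (g x).IsSymm) (x : Fin d → ℝ) : ((g x)⁻¹)ᵀ = (g x)⁻¹ := by
  rw [Matrix.transpose_nonsing_inv, (hgsym x)]

/-- Γ_{kim} + Γ_{kmi} = ∂_k g_{im} -/
theorem gamL_pair (hgsym : ∀ x, (g x).IsSymm) (k : Fin d) (x : Fin d → ℝ) :
    GamL g k x + (GamL g k x)ᵀ = dmat g k x := by
  ext i m
  simp only [Matrix.add_apply, GamL, Matrix.transpose_apply, Matrix.of_apply, ChristoffelLow,
    dmat]
  have e3 : pd k (fun y => g y m i) x = pd k (fun y => g y i m) x :=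
    pd_congr (fun y => (hgsym y).apply i m)
  rw [e3]
  ring

/-- symmetry of Christoffel symbols in the two lower indices -/
theorem christoffelLow_symm (hgsym : ∀ x, (g x).IsSymm) (i j c : Fin d) (x : Fin d → ℝ) :
    ChristoffelLow g i j c x = ChristoffelLow g j i c x := by
  simp only [ChristoffelLow]
  have e : pd c (fun y => g y i j) x = pd c (fun y => g y j i) x :=
    pd_congr (fun y => (hgsym y).apply j i)
  rw [e]
  ring

theorem christoffel_symm (hgsym : ∀ x, (g x).IsSymm) (l i j : Fin d) (x : Fin d → ℝ) :
    Christoffel g l i j x = Christoffel g l j i x := by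
  simp only [Christoffel]
  exact Finset.sum_congr rfl fun c _ => by rw [christoffelLow_symm hgsym i j c x]

theorem gamT_mul_g (hgsym : ∀ x, (g x).IsSymm) (hgpos : ∀ x, (g x).PosDef)
    (k : Fin d) (x : Fin d → ℝ) :
    (Gam g k x)ᵀ * g x = GamL g k x := by
  rw [gam_eq, Matrix.transpose_mul, Matrix.transpose_transpose, hbsym hgsym, Matrix.mul_assoc,
    Matrix.nonsing_inv_mul _ (hdetu hgpos x), Matrix.mul_one]

theorem g_mul_gam (hgsym : ∀ x, (g x).IsSymm) (hgpos : ∀ x, (g x).PosDef)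
    (k : Fin d) (x : Fin d → ℝ) :
    g x * Gam g k x = (GamL g k x)ᵀ := by
  rw [gam_eq, ← Matrix.mul_assoc, Matrix.mul_nonsing_inv _ (hdetu hgpos x), Matrix.one_mul]

/-- metric compatibility: `∇g = 0` -/
theorem covd2_metric (hgsym : ∀ x, (g x).IsSymm) (hgpos : ∀ x, (g x).PosDef)
    (k i m : Fin d) (x : Fin d → ℝ) : CovD2 g g k i m x = 0 := by
  rw [covd2_matrix, gamT_mul_g hgsym hgpos, g_mul_gam hgsym hgpos, ← gamL_pair hgsym k x]
  simp

/-- the key identity `b ∂g b = Γ b + b Γᵀ` -/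
theorem bdgb (hgsym : ∀ x, (g x).IsSymm) (hgpos : ∀ x, (g x).PosDef)
    (k : Fin d) (x : Fin d → ℝ) :
    (g x)⁻¹ * dmat g k x * (g x)⁻¹
      = Gam g k x * (g x)⁻¹ + (g x)⁻¹ * (Gam g k x)ᵀ := by
  rw [gam_eq, Matrix.transpose_mul, Matrix.transpose_transpose, hbsym hgsym, ← gamL_pair hgsym]
  rw [Matrix.mul_add, Matrix.add_mul, Matrix.mul_assoc ((g x)⁻¹) (GamL g k x) ((g x)⁻¹)]
  abel

end WithHyp
end CFD2
namespace CFD3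
open Matrix BigOperators CFD CFD2

variable {d : ℕ} {g P : MetricField d}

/-- `∇P` as a matrix in the last two indices -/
def Tm (g P : MetricField d) (k : Fin d) (x : Fin d → ℝ) : Matrix (Fin d) (Fin d) ℝ :=
  Matrix.of fun i j => CovD2 g P k i j x

theorem Tm_eq (k : Fin d) (x : Fin d → ℝ) :
    Tm g P k x = dmat P k x - (Gam g k x)ᵀ * P x - P x * Gam g k x := by
  ext i j; exact covd2_matrix g P k i j x

/-- symmetry in the two tensor indices -/
theorem T_sym23 (hPsym : ∀ x, (P x).IsSymm) (k i j : Fin d) (x : Fin d → ℝ) :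
    CovD2 g P k i j x = CovD2 g P k j i x := by
  simp only [CovD2]
  rw [pd_congr (fun y => ((hPsym y).apply j i).symm)]
  have e1 : ∀ l, P x l j = P x j l := fun l => ((hPsym x).apply l j).symm
  have e2 : ∀ l, P x i l = P x l i := fun l => ((hPsym x).apply i l).symm
  have h1 : ∑ l, Christoffel g l k i x * P x l j = ∑ l, Christoffel g l k i x * P x j l :=
    Finset.sum_congr rfl fun l _ => by rw [e1 l]
  have h2 : ∑ l, Christoffel g l k j x * P x i l = ∑ l, Christoffel g l k j x * P x l i :=
    Finset.sum_congr rfl fun l _ => by rw [e2 l]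
  rw [h1, h2]
  ring

section pointwise
variable (hPsym : ∀ x, (P x).IsSymm)
variable (hCod : ∀ (x : Fin d → ℝ) (i j k : Fin d), CovD2 g P i j k x = CovD2 g P j i k x)

include hCod in
theorem T_p1 (x : Fin d → ℝ) (k i m : Fin d) : CovD2 g P i k m x = CovD2 g P k i m x :=
  hCod x i k m

include hPsym hCod in
theorem T_p2 (x : Fin d → ℝ) (k i m : Fin d) : CovD2 g P m k i x = CovD2 g P k i m x := by
  rw [hCod x m k i, T_sym23 hPsym]

include hPsym hCod in
theorem T_p3 (x : Fin d → ℝ) (i c m : Fin d) : CovD2 g P i c m x = CovD2 g P m c i x := by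
  rw [hCod x i c m, T_sym23 hPsym, hCod x c m i]

include hPsym hCod in
theorem T_p4 (x : Fin d → ℝ) (m k a : Fin d) : CovD2 g P m k a x = CovD2 g P k a m x := by
  rw [hCod x m k a, T_sym23 hPsym]

end pointwise

section withQ
variable (hgs : ∀ i j, ContDiff ℝ (⊤ : ℕ∞) fun x => g x i j)
  (hPs : ∀ i j, ContDiff ℝ (⊤ : ℕ∞) fun x => P x i j)
  (hgsym : ∀ x, (g x).IsSymm) (hgpos : ∀ x, (g x).PosDef)

theorem hPa (hPs : ∀ i j, ContDiff ℝ (⊤ : ℕ∞) fun x => P x i j) :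
    ∀ i j x, DifferentiableAt ℝ (fun y => P y i j) x :=
  fun i j x => ((hPs i j).differentiable (by simp)).differentiableAt

include hgs hPs hgpos in
theorem hQd : ∀ i j x, DifferentiableAt ℝ
    (fun y => (P y * (g y)⁻¹ * P y) i j) x := by
  intro i j x
  exact diff_entry_mul (diff_entry_mul (hPa hPs) (hbd hgs hgpos)) (hPa hPs) i j x

include hgs hPs hgpos in
theorem dmatQ (k : Fin d) (x : Fin d → ℝ) :
    dmat (fun y => P y * (g y)⁻¹ * P y) k x
      = (dmat P k x * (g x)⁻¹ - P x * ((g x)⁻¹ * dmat g k x * (g x)⁻¹)) * P x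
          + P x * (g x)⁻¹ * dmat P k x := by
  have h1 := dmat_mul (M := fun y => P y * (g y)⁻¹) (N := P)
    (diff_entry_mul (hPa hPs) (hbd hgs hgpos)) (hPa hPs) k x
  have h2 := dmat_mul (M := P) (N := fun y => (g y)⁻¹) (hPa hPs) (hbd hgs hgpos) k x
  have h3 := dmat_inv g (hga hgs) (hdetu hgpos) k x
  rw [h1, h2, h3]
  rw [Matrix.mul_neg, ← sub_eq_add_neg]

include hgs hPs hgsym hgpos in
/-- `∇_k Q = (∇_k P) g⁻¹ P + P g⁻¹ (∇_k P)` in matrix form -/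
theorem CDm_Q (k : Fin d) (x : Fin d → ℝ) :
    dmat (fun y => P y * (g y)⁻¹ * P y) k x
        - (Gam g k x)ᵀ * (P x * (g x)⁻¹ * P x) - (P x * (g x)⁻¹ * P x) * Gam g k x
      = Tm g P k x * (g x)⁻¹ * P x + P x * (g x)⁻¹ * Tm g P k x := by
  rw [dmatQ hgs hPs hgpos, Tm_eq, bdgb hgsym hgpos]
  set b := (g x)⁻¹
  set p := P x
  set G := Gam g k x
  set D := dmat P k x
  noncomm_ring

end withQ
end CFD3
namespace CFD4
open Matrix BigOperators CFD CFD2 CFD3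

variable {d : ℕ} {g P : MetricField d}

/-- the deformed metric family -/
def Gf (g P : MetricField d) (ρ : ℝ) : MetricField d :=
  fun y => g y * (1 + ρ • ((g y)⁻¹ * P y)) * (1 + ρ • ((g y)⁻¹ * P y))

/-- the quadratic correction -/
def Qf (g P : MetricField d) : MetricField d := fun y => P y * (g y)⁻¹ * P y

section basic
variable {ρ : ℝ}
variable (hgs : ∀ i j, ContDiff ℝ (⊤ : ℕ∞) fun x => g x i j)
  (hPs : ∀ i j, ContDiff ℝ (⊤ : ℕ∞) fun x => P x i j)
  (hgsym : ∀ x, (g x).IsSymm) (hgpos : ∀ x, (g x).PosDef)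
  (hPsym : ∀ x, (P x).IsSymm)

include hgpos in
theorem G_decomp (y : Fin d → ℝ) :
    Gf g P ρ y = g y + (2 * ρ) • P y + (ρ ^ 2) • Qf g P y :=
  grho_expand (g y) (P y) (hdetu hgpos y) ρ

include hgpos in
theorem G_entry (y : Fin d → ℝ) (i j : Fin d) :
    Gf g P ρ y i j = g y i j + (2 * ρ) * P y i j + ρ ^ 2 * Qf g P y i j := by
  rw [G_decomp hgpos]
  simp [Matrix.add_apply, Matrix.smul_apply, smul_eq_mul]

include hgsym hgpos hPsym in
theorem Qsym (y : Fin d → ℝ) : (Qf g P y)ᵀ = Qf g P y := by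
  simp only [Qf, Matrix.transpose_mul]
  rw [hbsym hgsym, hPsym y, ← Matrix.mul_assoc]

include hgsym hgpos hPsym in
theorem Gsym (y : Fin d → ℝ) : (Gf g P ρ y).IsSymm := by
  unfold Matrix.IsSymm
  rw [G_decomp hgpos]
  simp only [Matrix.transpose_add, Matrix.transpose_smul]
  rw [hgsym y, hPsym y, Qsym hgsym hgpos hPsym]

include hgs hPs hgpos in
theorem hGd : ∀ i j x, DifferentiableAt ℝ (fun y => Gf g P ρ y i j) x := by
  intro i j x
  have e : (fun y => Gf g P ρ y i j)
      = fun y => g y i j + (2 * ρ) * P y i j + ρ ^ 2 * Qf g P y i j := by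
    funext y; exact G_entry hgpos y i j
  rw [e]
  exact ((hga hgs i j x).add ((hPa hPs i j x).const_mul _)).add
    ((hQd hgs hPs hgpos i j x).const_mul _)

include hgs hPs hgpos in
theorem dmatG (k : Fin d) (x : Fin d → ℝ) :
    dmat (Gf g P ρ) k x
      = dmat g k x + (2 * ρ) • dmat P k x + (ρ ^ 2) • dmat (Qf g P) k x := by
  ext i j
  simp only [dmat, Matrix.of_apply, Matrix.add_apply, Matrix.smul_apply, smul_eq_mul]
  rw [pd_congr (fun y => G_entry (ρ := ρ) hgpos y i j)]
  simp only [Qf]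
  rw [pd_add ((hga hgs i j x).fun_add ((hPa hPs i j x).const_mul _))
    ((hQd hgs hPs hgpos i j x).const_mul _),
    pd_add (hga hgs i j x) ((hPa hPs i j x).const_mul _),
    pd_const_mul _ (hPa hPs i j x), pd_const_mul _ (hQd hgs hPs hgpos i j x)]

include hgsym hgpos in
theorem CDm_metric (k : Fin d) (x : Fin d → ℝ) :
    dmat g k x - (Gam g k x)ᵀ * g x - g x * Gam g k x = 0 := by
  ext i m
  rw [← covd2_matrix g g k i m x, covd2_metric hgsym hgpos]
  simp

include hgs hPs hgsym hgpos in
/-- F6: the matrix form of `∇^g_k G` -/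
theorem CDm_G (k : Fin d) (x : Fin d → ℝ) :
    dmat (Gf g P ρ) k x - (Gam g k x)ᵀ * Gf g P ρ x - Gf g P ρ x * Gam g k x
      = (2 * ρ) • Tm g P k x
          + (ρ ^ 2) • (Tm g P k x * (g x)⁻¹ * P x + P x * (g x)⁻¹ * Tm g P k x) := by
  rw [dmatG hgs hPs hgpos, G_decomp hgpos]
  have h1 := CDm_metric hgsym hgpos (g := g) k x
  have h2 := Tm_eq (g := g) (P := P) k x
  have h3 := CDm_Q hgs hPs hgsym hgpos k x
  have e1 : dmat g k x = (Gam g k x)ᵀ * g x + g x * Gam g k x := by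
    have := sub_eq_zero.mpr h1.symm  -- not right; do directly
    rw [← sub_eq_zero]
    calc dmat g k x - ((Gam g k x)ᵀ * g x + g x * Gam g k x)
        = dmat g k x - (Gam g k x)ᵀ * g x - g x * Gam g k x := by abel
      _ = 0 := h1
  have e2 : dmat P k x = Tm g P k x + (Gam g k x)ᵀ * P x + P x * Gam g k x := by
    rw [h2]; abel
  have e3 : dmat (Qf g P) k x
      = (Tm g P k x * (g x)⁻¹ * P x + P x * (g x)⁻¹ * Tm g P k x)
          + (Gam g k x)ᵀ * (P x * (g x)⁻¹ * P x) + (P x * (g x)⁻¹ * P x) * Gam g k x := by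
    have : dmat (Qf g P) k x = dmat (fun y => P y * (g y)⁻¹ * P y) k x := rfl
    rw [this, ← h3]; abel
  rw [e1, e2, e3]
  simp only [Qf, Matrix.mul_add, Matrix.add_mul, Matrix.mul_smul, Matrix.smul_mul]
  module

include hgsym in
/-- KEY1: decomposition of the Christoffel symbols of an auxiliary symmetric tensor -/
theorem key1 (F : MetricField d) (hFsym : ∀ y, (F y).IsSymm) (i j m : Fin d) (x : Fin d → ℝ) :
    ChristoffelLow F i j m x
      = (CovD2 g F i j m x + CovD2 g F j i m x - CovD2 g F m i j x) / 2
        + ∑ l, Christoffel g l i j x * F x l m := by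
  simp only [CovD2, ChristoffelLow]
  have s1 : ∑ l, Christoffel g l j i x * F x l m = ∑ l, Christoffel g l i j x * F x l m :=
    Finset.sum_congr rfl fun l _ => by rw [christoffel_symm hgsym]
  have s2 : ∑ l, Christoffel g l i m x * F x j l = ∑ l, Christoffel g l m i x * F x l j :=
    Finset.sum_congr rfl fun l _ => by
      rw [christoffel_symm hgsym l i m x, (hFsym x).apply j l]
  have s3 : ∑ l, Christoffel g l j m x * F x i l = ∑ l, Christoffel g l m j x * F x i l :=
    Finset.sum_congr rfl fun l _ => by rw [christoffel_symm hgsym l j m x]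
  rw [s1] at *
  rw [s2, s3]
  ring

end basic
end CFD4
namespace CFD5
open Matrix BigOperators CFD CFD2 CFD3 CFD4

variable {d : ℕ} {g P : MetricField d} {ρ : ℝ}

theorem Tm_apply (k i j : Fin d) (x : Fin d → ℝ) :
    Tm g P k x i j = CovD2 g P k i j x := rfl

section syms
variable (hgsym : ∀ x, (g x).IsSymm) (hPsym : ∀ x, (P x).IsSymm)

include hgsym in
theorem bsymE (x : Fin d → ℝ) (a c : Fin d) : (g x)⁻¹ a c = (g x)⁻¹ c a := by
  conv_lhs => rw [← hbsym hgsym x]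
  rfl

include hPsym in
theorem TmSym (k : Fin d) (x : Fin d → ℝ) : (Tm g P k x)ᵀ = Tm g P k x := by
  ext i j
  rw [Matrix.transpose_apply, Tm_apply, Tm_apply, T_sym23 hPsym]

end syms

section F9
variable (hgs : ∀ i j, ContDiff ℝ (⊤ : ℕ∞) fun x => g x i j)
  (hPs : ∀ i j, ContDiff ℝ (⊤ : ℕ∞) fun x => P x i j)
  (hgsym : ∀ x, (g x).IsSymm) (hgpos : ∀ x, (g x).PosDef)
  (hPsym : ∀ x, (P x).IsSymm)
  (hCod : ∀ (x : Fin d → ℝ) (i j k : Fin d), CovD2 g P i j k x = CovD2 g P j i k x)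

include hgs hPs hgsym hgpos hPsym hCod in
/-- F9: the Christoffel symbols of the first kind of the deformed metric -/
theorem gamLowG (k i m : Fin d) (x : Fin d → ℝ) :
    ChristoffelLow (Gf g P ρ) k i m x
      = ρ * (Tm g P k x * (1 + ρ • ((g x)⁻¹ * P x))) i m
        + ∑ l, Christoffel g l k i x * Gf g P ρ x l m := by
  rw [key1 hgsym (Gf g P ρ) (fun y => Gsym hgsym hgpos hPsym y) k i m x]
  have cg : ∀ (a b c : Fin d), CovD2 g (Gf g P ρ) a b c x
      = ((2 * ρ) • Tm g P a x
          + (ρ ^ 2) • (Tm g P a x * (g x)⁻¹ * P x + P x * (g x)⁻¹ * Tm g P a x)) b c := by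
    intro a b c
    rw [covd2_matrix g (Gf g P ρ) a b c x, CDm_G hgs hPs hgsym hgpos a x]
  rw [cg k i m, cg i k m, cg m k i]
  -- index permutation identities
  have psymE : ∀ a c, P x a c = P x c a := fun a c => (hPsym x).apply c a
  have eB : Tm g P i x k m = Tm g P k x i m := T_p1 hCod x k i m
  have eC : Tm g P m x k i = Tm g P k x i m := T_p2 hPsym hCod x k i m
  have eBbp : (Tm g P i x * (g x)⁻¹ * P x) k m = (Tm g P k x * (g x)⁻¹ * P x) i m := by
    simp only [Matrix.mul_apply]
    refine Finset.sum_congr rfl fun e _ => ?_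
    congr 1
    refine Finset.sum_congr rfl fun f _ => ?_
    rw [Tm_apply, Tm_apply, T_p1 hCod]
  have epbB : (P x * (g x)⁻¹ * Tm g P i x) k m = (P x * (g x)⁻¹ * Tm g P m x) k i := by
    simp only [Matrix.mul_apply]
    refine Finset.sum_congr rfl fun e _ => ?_
    rw [Tm_apply, Tm_apply, T_p3 hPsym hCod]
  have eCbp : (Tm g P m x * (g x)⁻¹ * P x) k i = (P x * (g x)⁻¹ * Tm g P k x) i m := by
    simp only [Matrix.mul_apply, Finset.sum_mul]
    rw [Finset.sum_comm]
    refine Finset.sum_congr rfl fun f _ => ?_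
    refine Finset.sum_congr rfl fun e _ => ?_
    rw [Tm_apply, Tm_apply, T_p4 hPsym hCod, bsymE hgsym, psymE]
    ring
  simp only [Matrix.add_apply, Matrix.smul_apply, smul_eq_mul, Matrix.mul_add, Matrix.mul_one,
    Matrix.mul_smul, ← Matrix.mul_assoc]
  rw [eB, eC, eBbp, epbB, eCbp]
  ring

end F9
end CFD5
namespace CFD6
open Matrix BigOperators CFD CFD2 CFD3 CFD4 CFD5

variable {d : ℕ} {g P : MetricField d} {ρ : ℝ}

theorem sum_swap1 (B : Matrix (Fin d) (Fin d) ℝ) (L W : Fin d → ℝ) :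
    ∑ l, (∑ m, B l m * L m) * W l = ∑ m, L m * (∑ l, B l m * W l) := by
  simp only [Finset.sum_mul, Finset.mul_sum]
  rw [Finset.sum_comm]
  exact Finset.sum_congr rfl fun m _ => Finset.sum_congr rfl fun l _ => by ring

theorem sum_swap2 (A : Matrix (Fin d) (Fin d) ℝ) (c w : Fin d → ℝ) :
    ∑ m, (∑ l, c l * A l m) * w m = ∑ l, c l * (∑ m, A l m * w m) := by
  simp only [Finset.sum_mul, Finset.mul_sum]
  rw [Finset.sum_comm]
  exact Finset.sum_congr rfl fun m _ => Finset.sum_congr rfl fun l _ => by ring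

section main
variable (hgs : ∀ i j, ContDiff ℝ (⊤ : ℕ∞) fun x => g x i j)
  (hPs : ∀ i j, ContDiff ℝ (⊤ : ℕ∞) fun x => P x i j)
  (hgsym : ∀ x, (g x).IsSymm) (hgpos : ∀ x, (g x).PosDef)
  (hPsym : ∀ x, (P x).IsSymm)
  (hCod : ∀ (x : Fin d → ℝ) (i j k : Fin d), CovD2 g P i j k x = CovD2 g P j i k x)
  (hU : ∀ x : Fin d → ℝ, IsUnit ((1 + ρ • ((g x)⁻¹ * P x)).det))

/-- the derivative field `g_ρ' = 2P + 2ρ P g⁻¹ P` -/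
def G'f (g P : MetricField d) (ρ : ℝ) : MetricField d :=
  fun y => (2 : ℝ) • P y + (2 * ρ) • Qf g P y

theorem G'_entry (y : Fin d → ℝ) (a c : Fin d) :
    G'f g P ρ y a c = 2 * P y a c + 2 * ρ * Qf g P y a c := by
  simp only [G'f, Matrix.add_apply, Matrix.smul_apply, smul_eq_mul]

include hgpos in
theorem G'_deriv (y : Fin d → ℝ) (a c : Fin d) :
    deriv (fun r =>
        (g y * (1 + r • ((g y)⁻¹ * P y)) * (1 + r • ((g y)⁻¹ * P y))) a c) ρ
      = G'f g P ρ y a c := by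
  rw [deriv_grho (g y) (P y) (hdetu hgpos y) ρ a c, G'_entry]
  rfl

include hgs hPs hgpos in
theorem hG'd : ∀ a c x, DifferentiableAt ℝ (fun y => G'f g P ρ y a c) x := by
  intro a c x
  have e : (fun y => G'f g P ρ y a c)
      = fun y => 2 * P y a c + 2 * ρ * (P y * (g y)⁻¹ * P y) a c := by
    funext y; rw [G'_entry]; rfl
  rw [e]
  exact ((hPa hPs a c x).const_mul _).add ((hQd hgs hPs hgpos a c x).const_mul _)

include hgs hPs hgpos in
theorem dmatG' (k : Fin d) (x : Fin d → ℝ) :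
    dmat (G'f g P ρ) k x = (2 : ℝ) • dmat P k x + (2 * ρ) • dmat (Qf g P) k x := by
  ext a c
  simp only [dmat, Matrix.of_apply, Matrix.add_apply, Matrix.smul_apply, smul_eq_mul]
  rw [pd_congr (fun y => G'_entry (ρ := ρ) y a c)]
  simp only [Qf]
  rw [pd_add ((hPa hPs a c x).const_mul _) ((hQd hgs hPs hgpos a c x).const_mul _),
    pd_const_mul _ (hPa hPs a c x), pd_const_mul _ (hQd hgs hPs hgpos a c x)]

include hgs hPs hgsym hgpos in
/-- `∇^g_k g_ρ' = 2∇P + 2ρ(∇P g⁻¹ P + P g⁻¹ ∇P)`, matrix form -/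
theorem CDm_G' (k : Fin d) (x : Fin d → ℝ) :
    dmat (G'f g P ρ) k x - (Gam g k x)ᵀ * G'f g P ρ x - G'f g P ρ x * Gam g k x
      = (2 : ℝ) • Tm g P k x
          + (2 * ρ) • (Tm g P k x * (g x)⁻¹ * P x + P x * (g x)⁻¹ * Tm g P k x) := by
  have hx : G'f g P ρ x = (2 : ℝ) • P x + (2 * ρ) • Qf g P x := rfl
  rw [dmatG' hgs hPs hgpos, hx]
  have h2 := Tm_eq (g := g) (P := P) k x
  have h3 := CDm_Q hgs hPs hgsym hgpos k x
  have e2 : dmat P k x = Tm g P k x + (Gam g k x)ᵀ * P x + P x * Gam g k x := by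
    rw [h2]; abel
  have e3 : dmat (Qf g P) k x
      = (Tm g P k x * (g x)⁻¹ * P x + P x * (g x)⁻¹ * Tm g P k x)
          + (Gam g k x)ᵀ * (P x * (g x)⁻¹ * P x) + (P x * (g x)⁻¹ * P x) * Gam g k x := by
    have h0 : dmat (Qf g P) k x = dmat (fun y => P y * (g y)⁻¹ * P y) k x := rfl
    rw [h0, ← h3]; abel
  rw [e2, e3]
  simp only [Qf, Matrix.mul_add, Matrix.add_mul, Matrix.mul_smul, Matrix.smul_mul]
  module

include hgs hPs hgsym hgpos in
/-- `∇^g_k g_ρ' = 2∇P + 2ρ(∇P g⁻¹ P + P g⁻¹ ∇P)` -/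
theorem CD_G' (k i j : Fin d) (x : Fin d → ℝ) :
    CovD2 g (G'f g P ρ) k i j x
      = ((2 : ℝ) • Tm g P k x
          + (2 * ρ) • (Tm g P k x * (g x)⁻¹ * P x + P x * (g x)⁻¹ * Tm g P k x)) i j := by
  rw [covd2_matrix g (G'f g P ρ) k i j x, CDm_G' hgs hPs hgsym hgpos k x]

include hgs hPs hgsym hgpos hPsym hCod hU in
/-- the main computation: `∇^{g_ρ}_k (g_ρ')_{ij} = 2 ∇_k P_{ij}` -/
theorem main2 (k i j : Fin d) (x : Fin d → ℝ) :
    CovD2 (Gf g P ρ) (G'f g P ρ) k i j x = 2 * CovD2 g P k i j x := by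
  set b := (g x)⁻¹ with hb
  set p := P x with hp
  set A := Tm g P k x with hA
  set U : Matrix (Fin d) (Fin d) ℝ := 1 + ρ • (b * p) with hUdef
  set Gx := Gf g P ρ x with hGx
  set B := (Gf g P ρ x)⁻¹ with hB
  set G' := G'f g P ρ x with hG'
  -- point facts
  have hGxe : Gx = g x * U * U := rfl
  have hdetG : IsUnit Gx.det := by
    rw [hGxe, Matrix.det_mul, Matrix.det_mul]
    exact ((hdetu hgpos x).mul (hU x)).mul (hU x)
  have hGB : Gx * B = 1 := Matrix.mul_nonsing_inv _ hdetG
  have hGxsym : Gxᵀ = Gx := Gsym hgsym hgpos hPsym x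
  have hBsymM : Bᵀ = B := by
    rw [hB, Matrix.transpose_nonsing_inv, hGxsym]
  have hBsymE : ∀ l m', B l m' = B m' l := by
    intro l m'; conv_lhs => rw [← hBsymM]
    rfl
  have hUB : U * B = U⁻¹ * b := by
    have : B = U⁻¹ * (U⁻¹ * (g x)⁻¹) := by
      rw [hB, ← hGx, hGxe, Matrix.mul_inv_rev, Matrix.mul_inv_rev]
    rw [this, ← Matrix.mul_assoc, Matrix.mul_nonsing_inv _ (hU x), Matrix.one_mul]
  have hUBG' : U * (B * G') = (2 : ℝ) • (b * p) := by
    have e0 : U * (B * G') = (U⁻¹ * b) * G' := by rw [← Matrix.mul_assoc, hUB]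
    have eG' : G' = (2 : ℝ) • p + (2 * ρ) • (p * b * p) := rfl
    have hY : (b * p) * (b * p) = b * (p * (b * p)) := by simp only [Matrix.mul_assoc]
    have hUY : U * (b * p) = b * p + ρ • (b * (p * (b * p))) := by
      rw [hUdef, Matrix.add_mul, Matrix.one_mul, Matrix.smul_mul, hY]
    have e1 : (U⁻¹ * b) * G'
        = (2 : ℝ) • (U⁻¹ * (b * p)) + (2 * ρ) • (U⁻¹ * (b * (p * (b * p)))) := by
      rw [eG']
      simp only [Matrix.mul_add, Matrix.mul_smul, Matrix.mul_assoc]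
    have e2 : U⁻¹ * (U * (b * p)) = b * p := by
      rw [← Matrix.mul_assoc, Matrix.nonsing_inv_mul _ (hU x), Matrix.one_mul]
    rw [e0, e1]
    rw [hUY, Matrix.mul_add, Matrix.mul_smul] at e2
    have e4 := congrArg (fun M : Matrix (Fin d) (Fin d) ℝ => (2 : ℝ) • M) e2
    simp only [smul_add, smul_smul] at e4
    exact e4
  have hGxBG' : Gx * (B * G') = G' := by
    rw [← Matrix.mul_assoc, hGB, Matrix.one_mul]
  have hG'symM : G'ᵀ = G' := by
    have eG' : G' = (2 : ℝ) • p + (2 * ρ) • Qf g P x := rfl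
    rw [eG', Matrix.transpose_add, Matrix.transpose_smul, Matrix.transpose_smul,
      hp, hPsym x, Qsym hgsym hgpos hPsym x]
  have hG'symE : ∀ a c, G' a c = G' c a := by
    intro a c
    have h := congrFun (congrFun hG'symM a) c
    rw [Matrix.transpose_apply] at h
    exact h.symm
  -- the Christoffel symbols of the deformed metric, unfolded
  have hChr : ∀ (l c : Fin d), Christoffel (Gf g P ρ) l k c x
      = ∑ m, B l m * ChristoffelLow (Gf g P ρ) k c m x := fun l c => rfl
  -- evaluation of the two Christoffel sums
  have hAU : ∀ (c c' : Fin d), ∑ m, (Tm g P k x * U) c m * (B * G') m c'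
      = 2 * (A * (b * p)) c c' := by
    intro c c'
    have e1 : ∑ m, (Tm g P k x * U) c m * (B * G') m c'
        = ((Tm g P k x * U) * (B * G')) c c' := (Matrix.mul_apply (i := c) (k := c')).symm
    rw [e1, Matrix.mul_assoc, hUBG']
    simp [Matrix.mul_smul]; rfl
  have hSig : ∀ (c c' : Fin d), ∑ l, Christoffel (Gf g P ρ) l k c x * G' l c'
      = 2 * ρ * (A * (b * p)) c c' + ∑ l, Christoffel g l k c x * G' l c' := by
    intro c c'
    calc ∑ l, Christoffel (Gf g P ρ) l k c x * G' l c'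
        = ∑ l, (∑ m, B l m * ChristoffelLow (Gf g P ρ) k c m x) * G' l c' :=
          Finset.sum_congr rfl fun l _ => by rw [hChr l c]
      _ = ∑ m, ChristoffelLow (Gf g P ρ) k c m x * (∑ l, B l m * G' l c') :=
          sum_swap1 B _ _
      _ = ∑ m, (ρ * (A * U) c m + ∑ l, Christoffel g l k c x * Gf g P ρ x l m)
            * (B * G') m c' := by
          refine Finset.sum_congr rfl fun m _ => ?_
          rw [gamLowG (ρ := ρ) hgs hPs hgsym hgpos hPsym hCod k c m x]
          congr 1
          rw [Matrix.mul_apply]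
          exact Finset.sum_congr rfl fun l _ => by rw [hBsymE l m]
      _ = ρ * (∑ m, (A * U) c m * (B * G') m c')
            + ∑ m, (∑ l, Christoffel g l k c x * Gf g P ρ x l m) * (B * G') m c' := by
          rw [Finset.mul_sum, ← Finset.sum_add_distrib]
          exact Finset.sum_congr rfl fun m _ => by ring
      _ = ρ * (2 * (A * (b * p)) c c')
            + ∑ l, Christoffel g l k c x * (∑ m, Gf g P ρ x l m * (B * G') m c') := by
          rw [hAU c c', sum_swap2]
      _ = 2 * ρ * (A * (b * p)) c c' + ∑ l, Christoffel g l k c x * G' l c' := by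
          congr 1
          · ring
          · refine Finset.sum_congr rfl fun l _ => ?_
            congr 1
            have : ∑ m, Gf g P ρ x l m * (B * G') m c' = (Gx * (B * G')) l c' := by
              rw [Matrix.mul_apply]
            rw [this, hGxBG']
  -- assemble
  have hg' := CD_G' (ρ := ρ) hgs hPs hgsym hgpos k i j x
  have hAij : CovD2 g P k i j x = A i j := rfl
  rw [hAij]
  simp only [CovD2] at hg' ⊢
  simp only [← hG'] at hg' ⊢
  have hS2 : ∑ l, Christoffel (Gf g P ρ) l k j x * G' i l
      = 2 * ρ * (A * (b * p)) j i + ∑ l, Christoffel g l k j x * G' i l := by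
    have e : ∑ l, Christoffel (Gf g P ρ) l k j x * G' i l
        = ∑ l, Christoffel (Gf g P ρ) l k j x * G' l i :=
      Finset.sum_congr rfl fun l _ => by rw [hG'symE i l]
    have e' : ∑ l, Christoffel g l k j x * G' l i = ∑ l, Christoffel g l k j x * G' i l :=
      Finset.sum_congr rfl fun l _ => by rw [hG'symE l i]
    rw [e, hSig j i, e']
  rw [hSig i j, hS2]
  have htr : (A * b * p)ᵀ = p * b * A := by
    rw [hA, hb, hp, Matrix.transpose_mul, Matrix.transpose_mul, TmSym hPsym k x,
      hbsym hgsym, hPsym x, ← Matrix.mul_assoc]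
  have hq1 : (A * (b * p)) i j = (A * b * p) i j := by rw [← Matrix.mul_assoc]
  have hq2 : (A * (b * p)) j i = (p * b * A) i j := by
    rw [← Matrix.mul_assoc, ← htr]; rfl
  rw [hq1, hq2]
  simp only [Matrix.add_apply, Matrix.smul_apply, smul_eq_mul] at hg'
  linarith [hg']
end main
end CFD6
/-- For a symmetric Codazzi tensor `P` on `(M,g)`, `U = Id + ρP` invertible,
`g_ρ = g(U·,U·)`: `∂_ρ(g_ρ)_{ij} = 2 P_{ik} U^k_j` and
`∇^{g_ρ}_k (g_ρ')_{ij} = 2 ∇_k P_{ij}`; in particular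
`∇^{g_ρ}_k (g_ρ')_{ij} = ∇^{g_ρ}_j (g_ρ')_{ik}`. -/
theorem codazzi_family_first_derivative {d : ℕ} (g P : MetricField d) (ρ : ℝ)
    (hgs : ∀ i j, ContDiff ℝ (⊤ : ℕ∞) fun x => g x i j)
    (hPs : ∀ i j, ContDiff ℝ (⊤ : ℕ∞) fun x => P x i j)
    (hgsym : ∀ x, (g x).IsSymm) (hgpos : ∀ x, (g x).PosDef)
    (hPsym : ∀ x, (P x).IsSymm)
    (hCodazzi : ∀ (x : Fin d → ℝ) (i j k : Fin d),
      CovD2 g P i j k x = CovD2 g P j i k x)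
    (hU : ∀ x : Fin d → ℝ, IsUnit ((1 + ρ • ((g x)⁻¹ * P x)).det)) :
    (∀ (x : Fin d → ℝ) (i j : Fin d),
      deriv (fun r => (g x * (1 + r • ((g x)⁻¹ * P x)) * (1 + r • ((g x)⁻¹ * P x))) i j) ρ
        = 2 * ∑ k, P x i k * (1 + ρ • ((g x)⁻¹ * P x)) k j)
    ∧ (∀ (x : Fin d → ℝ) (k i j : Fin d),
      CovD2 (fun y => g y * (1 + ρ • ((g y)⁻¹ * P y)) * (1 + ρ • ((g y)⁻¹ * P y)))
          (fun y => Matrix.of fun i' j' =>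
            deriv (fun r =>
              (g y * (1 + r • ((g y)⁻¹ * P y)) * (1 + r • ((g y)⁻¹ * P y))) i' j') ρ)
          k i j x
        = 2 * CovD2 g P k i j x)
    ∧ (∀ (x : Fin d → ℝ) (k i j : Fin d),
      CovD2 (fun y => g y * (1 + ρ • ((g y)⁻¹ * P y)) * (1 + ρ • ((g y)⁻¹ * P y)))
          (fun y => Matrix.of fun i' j' =>
            deriv (fun r =>
              (g y * (1 + r • ((g y)⁻¹ * P y)) * (1 + r • ((g y)⁻¹ * P y))) i' j') ρ)
          k i j x
        = CovD2 (fun y => g y * (1 + ρ • ((g y)⁻¹ * P y)) * (1 + ρ • ((g y)⁻¹ * P y)))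
            (fun y => Matrix.of fun i' j' =>
              deriv (fun r =>
                (g y * (1 + r • ((g y)⁻¹ * P y)) * (1 + r • ((g y)⁻¹ * P y))) i' j') ρ)
            j i k x) := by
  
  have hfield : (fun y => Matrix.of fun i' j' =>
      deriv (fun r =>
        (g y * (1 + r • ((g y)⁻¹ * P y)) * (1 + r • ((g y)⁻¹ * P y))) i' j') ρ)
      = CFD6.G'f g P ρ := by
    funext y
    ext a c
    simp only [Matrix.of_apply]
    exact CFD6.G'_deriv hgpos y a c
  refine ⟨?_, ?_, ?_⟩
  · intro x i j
    rw [CFD.deriv_grho (g x) (P x) (CFD2.hdetu hgpos x) ρ i j]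
    have e : ∑ k, P x i k * (1 + ρ • ((g x)⁻¹ * P x)) k j
        = (P x * (1 + ρ • ((g x)⁻¹ * P x))) i j := (Matrix.mul_apply).symm
    rw [e]
    have e2 : P x * (1 + ρ • ((g x)⁻¹ * P x)) = P x + ρ • (P x * (g x)⁻¹ * P x) := by
      rw [Matrix.mul_add, Matrix.mul_one, Matrix.mul_smul, ← Matrix.mul_assoc]
    rw [e2]
    simp only [Matrix.add_apply, Matrix.smul_apply, smul_eq_mul]
    ring
  · intro x k i j
    rw [hfield]
    show CovD2 (CFD4.Gf g P ρ) (CFD6.G'f g P ρ) k i j x = 2 * CovD2 g P k i j x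
    exact CFD6.main2 hgs hPs hgsym hgpos hPsym hCodazzi hU k i j x
  · intro x k i j
    rw [hfield]
    show CovD2 (CFD4.Gf g P ρ) (CFD6.G'f g P ρ) k i j x
      = CovD2 (CFD4.Gf g P ρ) (CFD6.G'f g P ρ) j i k x
    rw [CFD6.main2 hgs hPs hgsym hgpos hPsym hCodazzi hU k i j x,
      CFD6.main2 hgs hPs hgsym hgpos hPsym hCodazzi hU j i k x]
    rw [hCodazzi x k i j, CFD3.T_sym23 hPsym i k j x, hCodazzi x i j k]

end
end
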